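/- arXiv:2401.04485 — 8 statements merged into one kernel-verified Lean document; each statement's English description precedes it below -/
import Mathlib

section
/- In the abstract framework, assume additionally that ι and C are injective and that the de Rham complex is exact at V, i.e. every v ∈ V with D v = 0 equals C q for some q ∈ Q. Then: (i) if (λ,u) ∈ ℝ × V with u ≠ 0 and λ ≠ 0 satisfies ⟨D u, D v⟩_W = λ ⟨ι u, ι v⟩_H for all v ∈ V, then ⟨ι u, ι (C q)⟩_H = 0 for all q ∈ Q, so (λ,u) solves the mixed eigenproblem with Lagrange multiplier p = 0; (ii) conversely, if (λ,u) ∈ ℝ × V with u ≠ 0 satisfies, for some p ∈ Q, both ⟨D u, D v⟩_W + ⟨ι v, ι (C p)⟩_H = λ ⟨ι u, ι v⟩_H for all v ∈ V and ⟨ι u, ι (C q)⟩_H = 0 for all q ∈ Q, then p = 0, λ ≠ 0, and ⟨D u, D v⟩_W = λ ⟨ι u, ι v⟩_H for all v ∈ V. -/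
/-!
Testing the eigenvalue equation with the curl fields `v = C q`, on which `D` vanishes, shows
that for `λ ≠ 0` an eigenfunction is `ι`-orthogonal to the range of `C`. Conversely, testing the
mixed equation with `v = C p` and using the constraint gives `‖ι (C p)‖² = 0`, so `p = 0`; and
`λ = 0` would force `D u = 0`, hence `u = C q` by exactness, and then the constraint gives
`‖ι u‖² = 0`, i.e. `u = 0`.
-/

open RealInnerProductSpace

section

variable {H W V : Type*}
  [NormedAddCommGroup H] [InnerProductSpace ℝ H]
  [NormedAddCommGroup W] [InnerProductSpace ℝ W]
  [NormedAddCommGroup V] [InnerProductSpace ℝ V]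
  (ι : V →ₗ[ℝ] H) (D : V →ₗ[ℝ] W) {lam : ℝ} {u : V}

theorem inner_map_eq_zero_of_mem_ker_of_eigen (hlam : lam ≠ 0)
    (heig : ∀ v, ⟪D u, D v⟫ = lam * ⟪ι u, ι v⟫) {w : V} (hw : D w = 0) :
    ⟪ι u, ι w⟫ = 0 := by
  have h := heig w
  rw [hw, inner_zero_right] at h
  exact (mul_eq_zero.mp h.symm).resolve_left hlam

theorem eigenvalue_ne_zero_of_orthogonal_ker (hι : Function.Injective ι) (hu : u ≠ 0)
    (heig : ∀ v, ⟪D u, D v⟫ = lam * ⟪ι u, ι v⟫)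
    (horth : ∀ w, D w = 0 → ⟪ι u, ι w⟫ = 0) : lam ≠ 0 := by
  rintro rfl
  have hDu : D u = 0 := inner_self_eq_zero.mp (by rw [heig u, zero_mul])
  have hιu : ι u = 0 := inner_self_eq_zero.mp (horth u hDu)
  exact hu (hι (by rw [hιu, map_zero]))

theorem map_eq_zero_of_mixed_eigen {w : V}
    (hmixed : ∀ v, ⟪D u, D v⟫ + ⟪ι v, ι w⟫ = lam * ⟪ι u, ι v⟫)
    (hDw : D w = 0) (horth : ⟪ι u, ι w⟫ = 0) : ι w = 0 := by
  have h := hmixed w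
  rw [hDw, inner_zero_right, horth, zero_add, mul_zero] at h
  exact inner_self_eq_zero.mp h

end

theorem continuous_mixed_equivalence_general
    {H W V Q : Type*}
    [NormedAddCommGroup H] [InnerProductSpace ℝ H]
    [NormedAddCommGroup W] [InnerProductSpace ℝ W]
    [NormedAddCommGroup V] [InnerProductSpace ℝ V]
    [NormedAddCommGroup Q] [InnerProductSpace ℝ Q]
    (ι : V →L[ℝ] H) (D : V →L[ℝ] W) (C : Q →L[ℝ] V)
    (hDC : ∀ q : Q, D (C q) = 0)
    (hι : Function.Injective ι) (hC : Function.Injective C)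
    (hexact : ∀ v : V, D v = 0 → ∃ q : Q, C q = v) :
    -- (i)
    ((∀ (lam : ℝ) (u : V), u ≠ 0 → lam ≠ 0 →
        (∀ v : V, (inner ℝ (D u) (D v) : ℝ) = lam * (inner ℝ (ι u) (ι v) : ℝ)) →
        ∀ q : Q, (inner ℝ (ι u) (ι (C q)) : ℝ) = 0)
      ∧
    -- (ii)
      (∀ (lam : ℝ) (u : V) (p : Q), u ≠ 0 →
        (∀ v : V, (inner ℝ (D u) (D v) : ℝ) + (inner ℝ (ι v) (ι (C p)) : ℝ)
            = lam * (inner ℝ (ι u) (ι v) : ℝ)) →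
        (∀ q : Q, (inner ℝ (ι u) (ι (C q)) : ℝ) = 0) →
        p = 0 ∧ lam ≠ 0 ∧
          ∀ v : V, (inner ℝ (D u) (D v) : ℝ) = lam * (inner ℝ (ι u) (ι v) : ℝ))) := by
  refine ⟨fun lam u _ hlam heig q =>
    inner_map_eq_zero_of_mem_ker_of_eigen ι.toLinearMap D.toLinearMap hlam heig (hDC q), ?_⟩
  intro lam u p hu hmixed horth
  have hp : p = 0 := by
    have hιCp := map_eq_zero_of_mixed_eigen ι.toLinearMap D.toLinearMap hmixed (hDC p) (horth p)
    exact hC (hι (by rw [map_zero, map_zero]; exact hιCp))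
  subst hp
  have heig : ∀ v, ⟪D u, D v⟫ = lam * ⟪ι u, ι v⟫ := by simpa using hmixed
  have horth_ker : ∀ w, D w = 0 → ⟪ι u, ι w⟫ = 0 := by
    intro w hw
    obtain ⟨q, rfl⟩ := hexact w hw
    exact horth q
  exact ⟨rfl, eigenvalue_ne_zero_of_orthogonal_ker ι.toLinearMap D.toLinearMap hι hu heig horth_ker,
    heig⟩

/-- Abstract form of Proposition 3.1 of the paper: equivalence of the
variational eigenproblem and its mixed formulation. -/
theorem continuous_mixed_equivalence
    {H W V Q : Type*}
    [NormedAddCommGroup H] [InnerProductSpace ℝ H] [CompleteSpace H]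
    [NormedAddCommGroup W] [InnerProductSpace ℝ W] [CompleteSpace W]
    [NormedAddCommGroup V] [InnerProductSpace ℝ V] [CompleteSpace V]
    [NormedAddCommGroup Q] [InnerProductSpace ℝ Q] [CompleteSpace Q]
    (ι : V →L[ℝ] H) (D : V →L[ℝ] W) (C : Q →L[ℝ] V)
    (hnorm : ∀ v : V, ‖v‖ ^ 2 = ‖ι v‖ ^ 2 + ‖D v‖ ^ 2)
    (hDC : ∀ q : Q, D (C q) = 0)
    (hι : Function.Injective ι) (hC : Function.Injective C)
    (hexact : ∀ v : V, D v = 0 → ∃ q : Q, C q = v) :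
    -- (i)
    ((∀ (lam : ℝ) (u : V), u ≠ 0 → lam ≠ 0 →
        (∀ v : V, (inner ℝ (D u) (D v) : ℝ) = lam * (inner ℝ (ι u) (ι v) : ℝ)) →
        ∀ q : Q, (inner ℝ (ι u) (ι (C q)) : ℝ) = 0)
      ∧
    -- (ii)
      (∀ (lam : ℝ) (u : V) (p : Q), u ≠ 0 →
        (∀ v : V, (inner ℝ (D u) (D v) : ℝ) + (inner ℝ (ι v) (ι (C p)) : ℝ)
            = lam * (inner ℝ (ι u) (ι v) : ℝ)) →
        (∀ q : Q, (inner ℝ (ι u) (ι (C q)) : ℝ) = 0) →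
        p = 0 ∧ lam ≠ 0 ∧
          ∀ v : V, (inner ℝ (D u) (D v) : ℝ) = lam * (inner ℝ (ι u) (ι v) : ℝ))) :=
  continuous_mixed_equivalence_general ι D C hDC hι hC hexact
end

section
/- In the abstract framework, let V_h ⊆ V and Q_h ⊆ Q be linear subspaces, let B : H × H → ℝ be a symmetric positive-semidefinite bilinear form (the discrete form b_h), and assume (exactness of the discrete complex) {v ∈ V_h : D v = 0} = C(Q_h) and (trivial kernel of b_h) that every v ∈ V_h with B(ι v, ι v) = 0 is zero. Then: (i) if (λ,u) ∈ ℝ × V_h with u ≠ 0 and λ ≠ 0 satisfies ⟨D u, D v⟩_W = λ B(ι u, ι v) for all v ∈ V_h, then B(ι u, ι (C q)) = 0 for all q ∈ Q_h, so (λ,u) solves the discrete mixed eigenproblem with multiplier p_h = 0; (ii) conversely, if (λ,u) ∈ ℝ × V_h with u ≠ 0 satisfies, for some p ∈ Q_h, both ⟨D u, D v⟩_W + B(ι v, ι (C p)) = λ B(ι u, ι v) for all v ∈ V_h and B(ι u, ι (C q)) = 0 for all q ∈ Q_h, then λ ≠ 0 and ⟨D u, D v⟩_W = λ B(ι u, ι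 v) for all v ∈ V_h. -/
/-!
Testing the variational equation against a discrete divergence-free field `w` kills the
left-hand side, so for `λ ≠ 0` the eigenfunction is `b_h`-orthogonal to `ker D ∩ V_h = C(Q_h)`.
Conversely, testing the mixed equation against `C p` itself leaves `b_h(C p, C p) = 0`, so
`C p = 0` and the mixed equation is the variational one; `λ = 0` would put `u` in `ker D ∩ V_h`,
orthogonal to itself, hence `u = 0`.
-/

open scoped InnerProductSpace

section

variable {V W : Type*} [AddCommGroup V] [Module ℝ V]
  [NormedAddCommGroup W] [InnerProductSpace ℝ W]
  (D : V → W) (b : V →ₗ[ℝ] V →ₗ[ℝ] ℝ) (Vh : Submodule ℝ V)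

theorem form_eq_zero_of_map_eq_zero_of_inner_eq_mul_form {lam : ℝ} {u : V}
    (hlam : lam ≠ 0) (heq : ∀ v ∈ Vh, ⟪D u, D v⟫_ℝ = lam * b u v)
    {w : V} (hw : w ∈ Vh) (hDw : D w = 0) : b u w = 0 := by
  have h := heq w hw
  rw [hDw, inner_zero_right, eq_comm, mul_eq_zero] at h
  exact h.resolve_left hlam

theorem eq_zero_of_inner_add_form_eq_mul_form {lam : ℝ} {u w : V}
    (hker : ∀ v ∈ Vh, b v v = 0 → v = 0)
    (heq : ∀ v ∈ Vh, ⟪D u, D v⟫_ℝ + b v w = lam * b u v)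
    (hw : w ∈ Vh) (hDw : D w = 0) (horth : b u w = 0) : w = 0 := by
  have h := heq w hw
  rw [hDw, inner_zero_right, zero_add, horth, mul_zero] at h
  exact hker w hw h

theorem ne_zero_of_inner_eq_mul_form {lam : ℝ} {u : V}
    (hker : ∀ v ∈ Vh, b v v = 0 → v = 0) (hu : u ∈ Vh) (hu0 : u ≠ 0)
    (heq : ∀ v ∈ Vh, ⟪D u, D v⟫_ℝ = lam * b u v)
    (horth : ∀ w ∈ Vh, D w = 0 → b u w = 0) : lam ≠ 0 := by
  rintro rfl
  have hDu : D u = 0 := by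
    simpa only [zero_mul, inner_self_eq_zero] using heq u hu
  exact hu0 (hker u hu (horth u hu hDu))

end

theorem discrete_mixed_equivalence_general
    {H W V Q : Type*}
    [NormedAddCommGroup H] [InnerProductSpace ℝ H]
    [NormedAddCommGroup W] [InnerProductSpace ℝ W]
    [NormedAddCommGroup V] [InnerProductSpace ℝ V]
    [NormedAddCommGroup Q] [InnerProductSpace ℝ Q]
    (ι : V →L[ℝ] H) (D : V →L[ℝ] W) (C : Q →L[ℝ] V)
    (Vh : Submodule ℝ V) (Qh : Submodule ℝ Q)
    (B : H →ₗ[ℝ] H →ₗ[ℝ] ℝ)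
    -- exactness of the discrete complex: {v ∈ V_h : D v = 0} = C(Q_h)
    (hexact : ∀ v : V, (v ∈ Vh ∧ D v = 0) ↔ ∃ q ∈ Qh, C q = v)
    -- trivial kernel of b_h on V_h
    (hker : ∀ v ∈ Vh, B (ι v) (ι v) = 0 → v = 0) :
    -- (i)
    ((∀ (lam : ℝ) (u : V), u ∈ Vh → u ≠ 0 → lam ≠ 0 →
        (∀ v ∈ Vh, (inner ℝ (D u) (D v) : ℝ) = lam * B (ι u) (ι v)) →
        ∀ q ∈ Qh, B (ι u) (ι (C q)) = 0)
      ∧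
    -- (ii)
      (∀ (lam : ℝ) (u : V) (p : Q), u ∈ Vh → p ∈ Qh → u ≠ 0 →
        (∀ v ∈ Vh, (inner ℝ (D u) (D v) : ℝ) + B (ι v) (ι (C p))
            = lam * B (ι u) (ι v)) →
        (∀ q ∈ Qh, B (ι u) (ι (C q)) = 0) →
        lam ≠ 0 ∧
          ∀ v ∈ Vh, (inner ℝ (D u) (D v) : ℝ) = lam * B (ι u) (ι v))) := by
  set b := B.compl₁₂ (ι : V →ₗ[ℝ] H) (ι : V →ₗ[ℝ] H)
  have hCQh : ∀ q ∈ Qh, C q ∈ Vh ∧ D (C q) = 0 := fun q hq => (hexact _).2 ⟨q, hq, rfl⟩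
  refine ⟨fun lam u _ _ hlam heq q hq => ?_, fun lam u p hu hp hu0 heq horth => ?_⟩
  · exact form_eq_zero_of_map_eq_zero_of_inner_eq_mul_form D b Vh hlam heq
      (hCQh q hq).1 (hCQh q hq).2
  · have horth' : ∀ w ∈ Vh, D w = 0 → b u w = 0 := fun w hw hDw => by
      obtain ⟨q, hq, rfl⟩ := (hexact w).1 ⟨hw, hDw⟩
      exact horth q hq
    have hCp : C p = 0 := eq_zero_of_inner_add_form_eq_mul_form D b Vh hker heq
      (hCQh p hp).1 (hCQh p hp).2 (horth p hp)
    have heq' : ∀ v ∈ Vh, ⟪D u, D v⟫_ℝ = lam * B (ι u) (ι v) := fun v hv => by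
      simpa only [hCp, map_zero, add_zero] using heq v hv
    exact ⟨ne_zero_of_inner_eq_mul_form D b Vh hker hu hu0 heq' horth', heq'⟩

/-- Abstract form of the paper's proposition on the equivalence of the discrete
variational formulation and the discrete mixed formulation of the eigenproblem. -/
theorem discrete_mixed_equivalence
    {H W V Q : Type*}
    [NormedAddCommGroup H] [InnerProductSpace ℝ H] [CompleteSpace H]
    [NormedAddCommGroup W] [InnerProductSpace ℝ W] [CompleteSpace W]
    [NormedAddCommGroup V] [InnerProductSpace ℝ V] [CompleteSpace V]
    [NormedAddCommGroup Q] [InnerProductSpace ℝ Q] [CompleteSpace Q]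
    (ι : V →L[ℝ] H) (D : V →L[ℝ] W) (C : Q →L[ℝ] V)
    (hnorm : ∀ v : V, ‖v‖ ^ 2 = ‖ι v‖ ^ 2 + ‖D v‖ ^ 2)
    (hDC : ∀ q : Q, D (C q) = 0)
    (Vh : Submodule ℝ V) (Qh : Submodule ℝ Q)
    (B : H →ₗ[ℝ] H →ₗ[ℝ] ℝ)
    (hBsymm : ∀ x y : H, B x y = B y x)
    (hBpos : ∀ x : H, 0 ≤ B x x)
    -- exactness of the discrete complex: {v ∈ V_h : D v = 0} = C(Q_h)
    (hexact : ∀ v : V, (v ∈ Vh ∧ D v = 0) ↔ ∃ q ∈ Qh, C q = v)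
    -- trivial kernel of b_h on V_h
    (hker : ∀ v ∈ Vh, B (ι v) (ι v) = 0 → v = 0) :
    -- (i)
    ((∀ (lam : ℝ) (u : V), u ∈ Vh → u ≠ 0 → lam ≠ 0 →
        (∀ v ∈ Vh, (inner ℝ (D u) (D v) : ℝ) = lam * B (ι u) (ι v)) →
        ∀ q ∈ Qh, B (ι u) (ι (C q)) = 0)
      ∧
    -- (ii)
      (∀ (lam : ℝ) (u : V) (p : Q), u ∈ Vh → p ∈ Qh → u ≠ 0 →
        (∀ v ∈ Vh, (inner ℝ (D u) (D v) : ℝ) + B (ι v) (ι (C p))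
            = lam * B (ι u) (ι v)) →
        (∀ q ∈ Qh, B (ι u) (ι (C q)) = 0) →
        lam ≠ 0 ∧
          ∀ v ∈ Vh, (inner ℝ (D u) (D v) : ℝ) = lam * B (ι u) (ι v))) :=
  discrete_mixed_equivalence_general ι D C Vh Qh B hexact hker
end

section
/- In the abstract framework, let V_h ⊆ V and Q_h ⊆ Q be linear subspaces with C(Q_h) ⊆ V_h, let B_h : H × H → ℝ be a symmetric positive-semidefinite bilinear form, and set K_h := {v ∈ V_h : B_h(ι v, ι (C q)) = 0 for all q ∈ Q_h}. Let α > 0 satisfy the ellipticity in the discrete kernel: ⟨D v, D v⟩_W ≥ α ‖v‖_V² for all v ∈ K_h. Let f ∈ H, and suppose (u,p) ∈ V × Q satisfies ⟨D u, D v⟩_W + ⟨ι v, ι (C p)⟩_H = ⟨f, ι v⟩_H for all v ∈ V and ⟨ι u, ι (C q)⟩_H = 0 for all q ∈ Q, while (u_h, p_h) ∈ V_h × Q_h satisfies ⟨D u_h, D v⟩_W + B_h(ι v, ι (C p_h)) = B_h(f, ι v) for all v ∈ V_h and B_h(ι u_h, ι (C q)) = 0 for all q ∈ Q_h. Assume there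 are constants E₁, E₂, E₃ ≥ 0 such that: (SA) there exists u^I ∈ K_h with ‖u − u^I‖_V ≤ E₂; (WA) |⟨ι v, ι (C p)⟩_H| ≤ E₁ ‖v‖_V for all v ∈ K_h; (consistency) |⟨f, ι v⟩_H − B_h(f, ι v)| ≤ E₃ ‖v‖_V for all v ∈ K_h. Then ‖u − u_h‖_V ≤ (1 + 1/α) E₂ + (E₁ + E₃)/α. -/
/-!
Put `v := u_h - u^I`. Both `u_h` and `u^I` lie in the discrete kernel `K_h`, hence so does `v`,
and testing the discrete problem with `v` kills the discrete pressure term. Subtracting the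
continuous problem tested with `v` gives
`‖D v‖² = (B_h(f, ι v) - ⟨f, ι v⟩) + ⟨ι v, ι (C p)⟩ + ⟨D (u - u^I), D v⟩`,
whose three terms are bounded by the consistency, (WA) and (SA) estimates times `‖v‖`.
Ellipticity on `K_h` then gives `α ‖v‖ ≤ E₃ + E₁ + E₂`, and the triangle inequality through
`u^I` finishes the proof.
-/

open RealInnerProductSpace

lemma le_div_of_mul_sq_le_mul {α c x : ℝ} (hα : 0 < α) (hc : 0 ≤ c) (hx : 0 ≤ x)
    (h : α * x ^ 2 ≤ c * x) : x ≤ c / α := by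
  rcases hx.eq_or_lt with rfl | hx
  · exact div_nonneg hc hα.le
  · rw [le_div_iff₀ hα]
    nlinarith

section Operators

variable {V H W : Type*} [NormedAddCommGroup V] [NormedAddCommGroup H] [NormedAddCommGroup W]

lemma norm_le_of_sq_norm_eq_add {ι : V → H} {D : V → W}
    (hnorm : ∀ v, ‖v‖ ^ 2 = ‖ι v‖ ^ 2 + ‖D v‖ ^ 2) (v : V) : ‖D v‖ ≤ ‖v‖ := by
  refine (pow_le_pow_iff_left₀ (norm_nonneg _) (norm_nonneg _) two_ne_zero).mp ?_
  nlinarith [hnorm v, sq_nonneg ‖ι v‖]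

lemma real_inner_le_norm_mul_norm_of_sq_norm_eq_add [InnerProductSpace ℝ W] {ι : V → H} {D : V → W}
    (hnorm : ∀ v, ‖v‖ ^ 2 = ‖ι v‖ ^ 2 + ‖D v‖ ^ 2) (x y : V) : ⟪D x, D y⟫ ≤ ‖x‖ * ‖y‖ :=
  (real_inner_le_norm _ _).trans <|
    mul_le_mul (norm_le_of_sq_norm_eq_add hnorm x) (norm_le_of_sq_norm_eq_add hnorm y)
      (norm_nonneg _) (norm_nonneg _)

end Operators

section DiscreteKernel

variable {H V Q : Type*} [AddCommGroup H] [Module ℝ H] [AddCommGroup V] [Module ℝ V]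
  (ι : V →ₗ[ℝ] H) (C : Q → V) (Vh : Submodule ℝ V) (Qh : Set Q) (Bh : H →ₗ[ℝ] H →ₗ[ℝ] ℝ)

def discreteKernel : Set V := {v : V | v ∈ Vh ∧ ∀ q ∈ Qh, Bh (ι v) (ι (C q)) = 0}

variable {ι C Vh Qh Bh}

lemma sub_mem_discreteKernel {x y : V} (hx : x ∈ discreteKernel ι C Vh Qh Bh)
    (hy : y ∈ discreteKernel ι C Vh Qh Bh) : x - y ∈ discreteKernel ι C Vh Qh Bh :=
  ⟨Vh.sub_mem hx.1 hy.1, fun q hq => by simp only [map_sub, LinearMap.sub_apply, hx.2 q hq,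
    hy.2 q hq, sub_zero]⟩

end DiscreteKernel

lemma real_inner_sub_eq_of_galerkin {H W V Q : Type*}
    [NormedAddCommGroup H] [InnerProductSpace ℝ H] [NormedAddCommGroup W] [InnerProductSpace ℝ W]
    [AddCommGroup V] [Module ℝ V] (ι : V →ₗ[ℝ] H) (D : V →ₗ[ℝ] W) (C : Q → V)
    (Bh : H →ₗ[ℝ] H →ₗ[ℝ] ℝ) (f : H) {u u_h w : V} {p p_h : Q} (uI : V)
    (hcont : ⟪D u, D w⟫ + ⟪ι w, ι (C p)⟫ = ⟪f, ι w⟫)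
    (hdisc : ⟪D u_h, D w⟫ + Bh (ι w) (ι (C p_h)) = Bh f (ι w))
    (hw : Bh (ι w) (ι (C p_h)) = 0) :
    ⟪D (u_h - uI), D w⟫ = (Bh f (ι w) - ⟪f, ι w⟫) + ⟪ι w, ι (C p)⟫ + ⟪D (u - uI), D w⟫ := by
  simp only [map_sub, inner_sub_left]
  linarith

theorem uniform_convergence_solution_operator_general
    {H W V Q : Type*}
    [NormedAddCommGroup H] [InnerProductSpace ℝ H]
    [NormedAddCommGroup W] [InnerProductSpace ℝ W]
    [NormedAddCommGroup V] [InnerProductSpace ℝ V]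
    [NormedAddCommGroup Q] [InnerProductSpace ℝ Q]
    (ι : V →L[ℝ] H) (D : V →L[ℝ] W) (C : Q →L[ℝ] V)
    (hnorm : ∀ v : V, ‖v‖ ^ 2 = ‖ι v‖ ^ 2 + ‖D v‖ ^ 2)
    (Vh : Submodule ℝ V) (Qh : Submodule ℝ Q)
    (Bh : H →ₗ[ℝ] H →ₗ[ℝ] ℝ)
    -- the discrete rotation-free kernel
    (Kh : Set V)
    (hKh : Kh = {v : V | v ∈ Vh ∧ ∀ q ∈ Qh, Bh (ι v) (ι (C q)) = 0})
    -- ellipticity in the discrete kernel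
    (α : ℝ) (hα : 0 < α)
    (hEDK : ∀ v ∈ Kh, (inner ℝ (D v) (D v) : ℝ) ≥ α * ‖v‖ ^ 2)
    -- the continuous mixed source problem
    (f : H) (u : V) (p : Q)
    (hcont1 : ∀ v : V,
      (inner ℝ (D u) (D v) : ℝ) + (inner ℝ (ι v) (ι (C p)) : ℝ) = (inner ℝ f (ι v) : ℝ))
    -- the discrete mixed source problem
    (u_h : V) (p_h : Q) (hu_h : u_h ∈ Vh) (hp_h : p_h ∈ Qh)
    (hdisc1 : ∀ v ∈ Vh,
      (inner ℝ (D u_h) (D v) : ℝ) + Bh (ι v) (ι (C p_h)) = Bh f (ι v))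
    (hdisc2 : ∀ q ∈ Qh, Bh (ι u_h) (ι (C q)) = 0)
    -- the three error bounds
    (E₁ E₂ E₃ : ℝ) (hE₁ : 0 ≤ E₁) (hE₃ : 0 ≤ E₃)
    (hSA : ∃ uI ∈ Kh, ‖u - uI‖ ≤ E₂)
    (hWA : ∀ v ∈ Kh, |(inner ℝ (ι v) (ι (C p)) : ℝ)| ≤ E₁ * ‖v‖)
    (hcons : ∀ v ∈ Kh, |(inner ℝ f (ι v) : ℝ) - Bh f (ι v)| ≤ E₃ * ‖v‖) :
    ‖u - u_h‖ ≤ (1 + 1 / α) * E₂ + (E₁ + E₃) / α := by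
  obtain ⟨uI, huI, hu_uI⟩ := hSA
  change Kh = discreteKernel (ι : V →ₗ[ℝ] H) C Vh Qh Bh at hKh
  subst hKh
  set v := u_h - uI
  have hv : v ∈ discreteKernel (ι : V →ₗ[ℝ] H) C Vh Qh Bh :=
    sub_mem_discreteKernel ⟨hu_h, hdisc2⟩ huI
  have hDv := real_inner_sub_eq_of_galerkin (ι : V →ₗ[ℝ] H) (D : V →ₗ[ℝ] W) C Bh f uI
    (hcont1 v) (hdisc1 v hv.1) (hv.2 p_h hp_h)
  have hα_v : α * ‖v‖ ^ 2 ≤ (E₃ + E₁ + ‖u - uI‖) * ‖v‖ := by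
    have hcons_v := (abs_le.mp (hcons v hv)).1
    have hWA_v := (le_abs_self _).trans (hWA v hv)
    have hSA_v := real_inner_le_norm_mul_norm_of_sq_norm_eq_add hnorm (u - uI) v
    simp only [ContinuousLinearMap.coe_coe] at hDv
    linarith [hEDK v hv]
  have hv_le : ‖v‖ ≤ (E₃ + E₁ + E₂) / α :=
    (le_div_of_mul_sq_le_mul hα (by positivity) (norm_nonneg v) hα_v).trans
      (by gcongr)
  calc ‖u - u_h‖ = ‖(u - uI) - v‖ := by simp only [v, sub_sub_sub_cancel_right]
    _ ≤ ‖u - uI‖ + ‖v‖ := norm_sub_le _ _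
    _ ≤ E₂ + (E₃ + E₁ + E₂) / α := add_le_add hu_uI hv_le
    _ = (1 + 1 / α) * E₂ + (E₁ + E₃) / α := by field_simp; ring

/-- Abstract form of the paper's theorem on the convergence of the discrete
solution operators T_h to T, applied to a datum f: the error between the
continuous and the discrete mixed-problem solutions is controlled by the
strong approximability (SA), weak approximability (WA) and consistency bounds. -/
theorem uniform_convergence_solution_operator
    {H W V Q : Type*}
    [NormedAddCommGroup H] [InnerProductSpace ℝ H] [CompleteSpace H]
    [NormedAddCommGroup W] [InnerProductSpace ℝ W] [CompleteSpace W]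
    [NormedAddCommGroup V] [InnerProductSpace ℝ V] [CompleteSpace V]
    [NormedAddCommGroup Q] [InnerProductSpace ℝ Q] [CompleteSpace Q]
    (ι : V →L[ℝ] H) (D : V →L[ℝ] W) (C : Q →L[ℝ] V)
    (hnorm : ∀ v : V, ‖v‖ ^ 2 = ‖ι v‖ ^ 2 + ‖D v‖ ^ 2)
    (hDC : ∀ q : Q, D (C q) = 0)
    (Vh : Submodule ℝ V) (Qh : Submodule ℝ Q)
    (hCQ : ∀ q ∈ Qh, C q ∈ Vh)
    (Bh : H →ₗ[ℝ] H →ₗ[ℝ] ℝ)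
    (hBsymm : ∀ x y : H, Bh x y = Bh y x)
    (hBpos : ∀ x : H, 0 ≤ Bh x x)
    -- the discrete rotation-free kernel
    (Kh : Set V)
    (hKh : Kh = {v : V | v ∈ Vh ∧ ∀ q ∈ Qh, Bh (ι v) (ι (C q)) = 0})
    -- ellipticity in the discrete kernel
    (α : ℝ) (hα : 0 < α)
    (hEDK : ∀ v ∈ Kh, (inner ℝ (D v) (D v) : ℝ) ≥ α * ‖v‖ ^ 2)
    -- the continuous mixed source problem
    (f : H) (u : V) (p : Q)
    (hcont1 : ∀ v : V,
      (inner ℝ (D u) (D v) : ℝ) + (inner ℝ (ι v) (ι (C p)) : ℝ) = (inner ℝ f (ι v) : ℝ))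
    (hcont2 : ∀ q : Q, (inner ℝ (ι u) (ι (C q)) : ℝ) = 0)
    -- the discrete mixed source problem
    (u_h : V) (p_h : Q) (hu_h : u_h ∈ Vh) (hp_h : p_h ∈ Qh)
    (hdisc1 : ∀ v ∈ Vh,
      (inner ℝ (D u_h) (D v) : ℝ) + Bh (ι v) (ι (C p_h)) = Bh f (ι v))
    (hdisc2 : ∀ q ∈ Qh, Bh (ι u_h) (ι (C q)) = 0)
    -- the three error bounds
    (E₁ E₂ E₃ : ℝ) (hE₁ : 0 ≤ E₁) (hE₂ : 0 ≤ E₂) (hE₃ : 0 ≤ E₃)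
    (hSA : ∃ uI ∈ Kh, ‖u - uI‖ ≤ E₂)
    (hWA : ∀ v ∈ Kh, |(inner ℝ (ι v) (ι (C p)) : ℝ)| ≤ E₁ * ‖v‖)
    (hcons : ∀ v ∈ Kh, |(inner ℝ f (ι v) : ℝ) - Bh f (ι v)| ≤ E₃ * ‖v‖) :
    ‖u - u_h‖ ≤ (1 + 1 / α) * E₂ + (E₁ + E₃) / α :=
  uniform_convergence_solution_operator_general ι D C hnorm Vh Qh Bh Kh hKh α hα hEDK f u p hcont1
    u_h p_h hu_h hp_h hdisc1 hdisc2 E₁ E₂ E₃ hE₁ hE₃ hSA hWA hcons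
end

section
/- Let H and W be real Hilbert spaces, V a real Hilbert space with continuous linear maps ι : V → H and D : V → W such that ‖v‖_V² = ‖ι v‖_H² + ‖D v‖_W² for all v ∈ V. Let N ⊆ H be a set and C_F > 0 a constant such that ‖ι v‖_H ≤ C_F ‖D v‖_W for every v ∈ V with ι v ∈ N (Friedrichs inequality on rotation-free fields). Let (K_n)_{n∈ℕ} be a family of linear subspaces of V satisfying the strong discrete compactness property: for every function φ : ℕ → ℕ and every sequence (v_k) in V with v_k ∈ K_{φ(k)} for all k and sup_k ‖v_k‖_V < ∞, there exist a subsequence (v_{k_j}) and u₀ ∈ N with ‖ι v_{k_j} − u₀‖_H → 0. Then the ellipticity in the discrete kernel holds uniformly: there exists α > 0 such that ‖D v‖_W² ≥ α ‖v‖_V² for all n ∈ ℕ and all v ∈ K_n. -/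
open Filter

/-- Abstract form of the paper's proposition "SDCP implies EDK": the strong
discrete compactness property, together with the Friedrichs inequality on
rotation-free fields, yields the uniform ellipticity in the discrete kernels. -/
theorem sdcp_implies_edk
    {H W V : Type*}
    [NormedAddCommGroup H] [InnerProductSpace ℝ H] [CompleteSpace H]
    [NormedAddCommGroup W] [InnerProductSpace ℝ W] [CompleteSpace W]
    [NormedAddCommGroup V] [InnerProductSpace ℝ V] [CompleteSpace V]
    (ι : V →L[ℝ] H) (D : V →L[ℝ] W)
    (hnorm : ∀ v : V, ‖v‖ ^ 2 = ‖ι v‖ ^ 2 + ‖D v‖ ^ 2)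
    (N : Set H) (C_F : ℝ) (hCF : 0 < C_F)
    (hFriedrichs : ∀ v : V, ι v ∈ N → ‖ι v‖ ≤ C_F * ‖D v‖)
    (K : ℕ → Submodule ℝ V)
    (hSDCP : ∀ (φ : ℕ → ℕ) (v : ℕ → V), (∀ k, v k ∈ K (φ k)) →
      (∃ M : ℝ, ∀ k, ‖v k‖ ≤ M) →
      ∃ σ : ℕ → ℕ, StrictMono σ ∧ ∃ u₀ ∈ N,
        Tendsto (fun j => ‖ι (v (σ j)) - u₀‖) atTop (nhds 0)) :
    ∃ α : ℝ, 0 < α ∧ ∀ (n : ℕ), ∀ v ∈ K n, ‖D v‖ ^ 2 ≥ α * ‖v‖ ^ 2 := by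
  by_contra hcon
  push_neg at hcon
  -- extract a sequence violating ellipticity with α = 1/(k+1)
  have hchoice : ∀ k : ℕ, ∃ n : ℕ, ∃ v ∈ K n,
      ‖D v‖ ^ 2 < (1 / ((k : ℝ) + 1)) * ‖v‖ ^ 2 := by
    intro k
    exact hcon (1 / ((k : ℝ) + 1)) (by positivity)
  choose n v hvK hvlt using hchoice
  have hvne : ∀ k, v k ≠ 0 := by
    intro k hk
    have := hvlt k
    rw [hk] at this
    simp at this
  -- normalized sequence
  set w : ℕ → V := fun k => ‖v k‖⁻¹ • v k with hw
  have hwnorm : ∀ k, ‖w k‖ = 1 := by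
    intro k
    have h0 : ‖v k‖ ≠ 0 := norm_ne_zero_iff.mpr (hvne k)
    simp [hw, norm_smul, inv_mul_cancel₀ h0]
  have hwK : ∀ k, w k ∈ K (n k) := fun k => (K (n k)).smul_mem _ (hvK k)
  have hwD : ∀ k, ‖D (w k)‖ ^ 2 < 1 / ((k : ℝ) + 1) := by
    intro k
    have h0 : (0 : ℝ) < ‖v k‖ := norm_pos_iff.mpr (hvne k)
    have hmap : D (w k) = ‖v k‖⁻¹ • D (v k) := by simp [hw]
    have h1 : ‖D (w k)‖ ^ 2 = (‖v k‖⁻¹) ^ 2 * ‖D (v k)‖ ^ 2 := by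
      rw [hmap, norm_smul, Real.norm_eq_abs, abs_of_pos (inv_pos.mpr h0)]
      ring
    have h2 : (‖v k‖⁻¹) ^ 2 * ‖D (v k)‖ ^ 2 <
        (‖v k‖⁻¹) ^ 2 * ((1 / ((k : ℝ) + 1)) * ‖v k‖ ^ 2) := by
      apply mul_lt_mul_of_pos_left (hvlt k)
      positivity
    have h3 : (‖v k‖⁻¹) ^ 2 * ((1 / ((k : ℝ) + 1)) * ‖v k‖ ^ 2)
        = 1 / ((k : ℝ) + 1) := by
      field_simp
    rw [h1]
    rw [h3] at h2
    exact h2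
  obtain ⟨σ, hσ, u₀, hu₀N, htend⟩ := hSDCP n w hwK ⟨1, fun k => (hwnorm k).le⟩
  set f : ℕ → V := fun j => w (σ j) with hf
  -- ι ∘ f tends to u₀
  have hι : Tendsto (fun j => ι (f j)) atTop (nhds u₀) :=
    tendsto_iff_norm_sub_tendsto_zero.mpr htend
  -- D ∘ f tends to 0
  have hDf : Tendsto (fun j => D (f j)) atTop (nhds 0) := by
    rw [tendsto_zero_iff_norm_tendsto_zero]
    apply squeeze_zero (f := fun j : ℕ => ‖D (f j)‖) (fun j => norm_nonneg _)
      (g := fun j : ℕ => Real.sqrt (1 / ((j : ℝ) + 1)))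
    · intro j
      have hle : ‖D (f j)‖ ^ 2 ≤ 1 / ((j : ℝ) + 1) := by
        have h1 : ‖D (f j)‖ ^ 2 < 1 / ((σ j : ℝ) + 1) := hwD (σ j)
        have h2 : (1 : ℝ) / ((σ j : ℝ) + 1) ≤ 1 / ((j : ℝ) + 1) := by
          apply one_div_le_one_div_of_le (by positivity)
          have : j ≤ σ j := hσ.le_apply
          push_cast
          exact_mod_cast Nat.succ_le_succ this
        linarith
      rw [show (‖D (f j)‖ : ℝ) = Real.sqrt (‖D (f j)‖ ^ 2) by
        rw [Real.sqrt_sq (norm_nonneg _)]]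
      exact Real.sqrt_le_sqrt hle
    · have h1 : Tendsto (fun j : ℕ => 1 / ((j : ℝ) + 1)) atTop (nhds 0) :=
        tendsto_one_div_add_atTop_nhds_zero_nat
      have h2 := (Real.continuous_sqrt.tendsto 0).comp h1
      simp only [Function.comp_def, Real.sqrt_zero] at h2
      exact h2
  -- the pair (ι f, D f) converges, hence f is Cauchy by the norm identity
  have hg : Tendsto (fun j => ((ι (f j), D (f j)) : H × W)) atTop
      (nhds (u₀, 0)) := hι.prodMk_nhds hDf
  have hgC : CauchySeq (fun j => ((ι (f j), D (f j)) : H × W)) := hg.cauchySeq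
  have hfC : CauchySeq f := by
    rw [Metric.cauchySeq_iff]
    intro ε hε
    obtain ⟨M, hM⟩ := Metric.cauchySeq_iff.mp hgC (ε / 2) (by positivity)
    refine ⟨M, fun m hm n hn => ?_⟩
    have hd := hM m hm n hn
    have hsq : ‖f m - f n‖ ^ 2 = ‖ι (f m) - ι (f n)‖ ^ 2 +
        ‖D (f m) - D (f n)‖ ^ 2 := by
      have := hnorm (f m - f n)
      simpa [map_sub] using this
    have hdist : dist ((ι (f m), D (f m)) : H × W) (ι (f n), D (f n))
        = max (dist (ι (f m)) (ι (f n))) (dist (D (f m)) (D (f n))) :=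
      Prod.dist_eq
    rw [hdist] at hd
    have h1 : ‖ι (f m) - ι (f n)‖ < ε / 2 :=
      lt_of_le_of_lt (by rw [← dist_eq_norm]; exact le_max_left _ _) hd
    have h2 : ‖D (f m) - D (f n)‖ < ε / 2 :=
      lt_of_le_of_lt (by rw [← dist_eq_norm]; exact le_max_right _ _) hd
    have hsq2 : ‖f m - f n‖ ^ 2 < ε ^ 2 := by
      have e1 : ‖ι (f m) - ι (f n)‖ ^ 2 < (ε / 2) ^ 2 := by
        apply pow_lt_pow_left₀ h1 (norm_nonneg _)
        norm_num
      have e2 : ‖D (f m) - D (f n)‖ ^ 2 < (ε / 2) ^ 2 := by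
        apply pow_lt_pow_left₀ h2 (norm_nonneg _)
        norm_num
      nlinarith
    rw [dist_eq_norm]
    exact lt_of_pow_lt_pow_left₀ 2 hε.le hsq2
  obtain ⟨vL, hvL⟩ := cauchySeq_tendsto_of_complete hfC
  -- identify the limit
  have hιvL : ι vL = u₀ :=
    tendsto_nhds_unique ((ι.continuous.tendsto vL).comp hvL) hι
  have hDvL : D vL = 0 :=
    tendsto_nhds_unique ((D.continuous.tendsto vL).comp hvL) hDf
  have hnvL : ‖vL‖ = 1 := by
    have h1 : Tendsto (fun j => ‖f j‖) atTop (nhds ‖vL‖) :=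
      (continuous_norm.tendsto vL).comp hvL
    have h2 : Tendsto (fun j => ‖f j‖) atTop (nhds 1) := by
      simpa [hf, hwnorm] using tendsto_const_nhds (x := (1 : ℝ)) (f := atTop (α := ℕ))
    exact tendsto_nhds_unique h1 h2
  -- Friedrichs at the limit yields a contradiction
  have hFr : ‖ι vL‖ ≤ C_F * ‖D vL‖ := hFriedrichs vL (hιvL ▸ hu₀N)
  rw [hDvL] at hFr
  simp only [norm_zero, mul_zero] at hFr
  have hι0 : ‖ι vL‖ = 0 := le_antisymm hFr (norm_nonneg _)
  have : ‖vL‖ ^ 2 = 0 := by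
    rw [hnorm vL, hι0, hDvL]
    simp
  rw [hnvL] at this
  norm_num at this
end

section
/- Let H and Q be real Hilbert spaces, V a real Hilbert space with a continuous linear map ι : V → H, and C : Q → H a continuous linear map. Define N := {w ∈ H : ⟨w, C q⟩_H = 0 for all q ∈ Q}. Let Q₀ be a real normed space and j : Q₀ → Q a continuous linear map. Let (K_n)_{n∈ℕ} be a family of linear subspaces of V satisfying the strong discrete compactness property: for every function φ : ℕ → ℕ and every sequence (v_k) in V with v_k ∈ K_{φ(k)} for all k and sup_k ‖v_k‖_V < ∞, there exist a subsequence (v_{k_j}) and u₀ ∈ N with ‖ι v_{k_j} − u₀‖_H → 0. Then the weak approximability property holds: the quantity sup{ |⟨ι v, C(j p)⟩_H| : p ∈ Q₀ with ‖p‖_{Q₀} ≤ 1, v ∈ K_n with ‖v‖_V ≤ 1 } tends to 0 as n → ∞; equivalently, there is a sequence ω_n → 0 with |⟨ι v, C(j p)⟩_H| ≤ ω_n ‖p‖_{Q₀} ‖v‖_V for all n, p ∈ Q₀ and v ∈ K_n. -/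
/-!
Take `ω n` to be the norm of the bilinear form `(v, p) ↦ ⟪ι v, C (j p)⟫` restricted to `K n × Q₀`.
If `ω` did not tend to `0`, there would be unit vectors `v k ∈ K (φ k)` and `p k` with the form
bounded below by some `ε > 0`. By discrete compactness `ι (v k) → u₀ ∈ N` along a subsequence, and
since `u₀` is orthogonal to the range of `C`, the form is at most `‖ι (v k) - u₀‖ ‖C ∘ j‖ → 0`.
-/

open Filter Topology

namespace ContinuousLinearMap

variable {𝕜 E F G : Type*} [DenselyNormedField 𝕜]
  [NormedAddCommGroup E] [NormedSpace 𝕜 E] [NormedAddCommGroup F] [NormedSpace 𝕜 F]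
  [NormedAddCommGroup G] [NormedSpace 𝕜 G]

theorem exists_lt_apply_apply_of_lt_opNorm (B : E →L[𝕜] F →L[𝕜] G) {r : ℝ} (hr : r < ‖B‖) :
    ∃ x : E, ‖x‖ < 1 ∧ ∃ y : F, ‖y‖ < 1 ∧ r < ‖B x y‖ := by
  obtain ⟨x, hx, hrx⟩ := B.exists_lt_apply_of_lt_opNorm hr
  obtain ⟨y, hy, hrxy⟩ := (B x).exists_lt_apply_of_lt_opNorm hrx
  exact ⟨x, hx, y, hy, hrxy⟩

theorem tendsto_opNorm_comp_subtypeL_zero (B : E →L[𝕜] F →L[𝕜] G) (K : ℕ → Submodule 𝕜 E)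
    (hB : ∀ (φ : ℕ → ℕ) (v : ℕ → E) (p : ℕ → F), (∀ k, v k ∈ K (φ k)) → (∀ k, ‖v k‖ ≤ 1) →
      (∀ k, ‖p k‖ ≤ 1) → (0 : G) ∈ closure (Set.range fun k => B (v k) (p k))) :
    Tendsto (fun n => ‖B.comp (K n).subtypeL‖) atTop (𝓝 0) := by
  have hsmall : ∀ ε > 0, ∀ᶠ n in atTop, ‖B.comp (K n).subtypeL‖ ≤ ε := by
    intro ε hε
    by_contra hfreq
    simp only [not_eventually, not_le] at hfreq
    obtain ⟨φ, -, hφ⟩ := extraction_of_frequently_atTop hfreq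
    choose v hv p hp hlarge using fun k => exists_lt_apply_apply_of_lt_opNorm _ (hφ k)
    obtain ⟨-, ⟨k, rfl⟩, hk⟩ := Metric.mem_closure_iff.1
      (hB φ (fun k => v k) p (fun k => (v k).2) (fun k => (hv k).le) (fun k => (hp k).le)) ε hε
    rw [dist_zero_left] at hk
    exact (hlarge k).not_gt hk
  refine tendsto_order.2 ⟨fun a ha => .of_forall fun _ => ha.trans_le (opNorm_nonneg _),
    fun a ha => ?_⟩
  exact (hsmall (a / 2) (half_pos ha)).mono fun n hn => hn.trans_lt (half_lt_self ha)

end ContinuousLinearMap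

theorem abs_real_inner_le_norm_sub_mul_norm {H : Type*} [NormedAddCommGroup H]
    [InnerProductSpace ℝ H] {u y : H} (hu : inner ℝ u y = 0) (x : H) :
    |inner ℝ x y| ≤ ‖x - u‖ * ‖y‖ := by
  rw [← sub_zero (inner ℝ x y), ← hu, ← inner_sub_left]
  exact abs_real_inner_le_norm _ _

theorem sdcp_implies_wa_general
    {H Q V Q₀ : Type*}
    [NormedAddCommGroup H] [InnerProductSpace ℝ H]
    [NormedAddCommGroup Q] [InnerProductSpace ℝ Q]
    [NormedAddCommGroup V] [InnerProductSpace ℝ V]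
    [NormedAddCommGroup Q₀] [NormedSpace ℝ Q₀]
    (ι : V →L[ℝ] H) (C : Q →L[ℝ] H) (j : Q₀ →L[ℝ] Q)
    (K : ℕ → Submodule ℝ V)
    (hSDCP : ∀ (φ : ℕ → ℕ) (v : ℕ → V), (∀ k, v k ∈ K (φ k)) →
      (∃ M : ℝ, ∀ k, ‖v k‖ ≤ M) →
      ∃ σ : ℕ → ℕ, StrictMono σ ∧
        ∃ u₀ ∈ {w : H | ∀ q : Q, (inner ℝ w (C q) : ℝ) = 0},
          Tendsto (fun i => ‖ι (v (σ i)) - u₀‖) atTop (nhds 0)) :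
    ∃ ω : ℕ → ℝ, Tendsto ω atTop (nhds 0) ∧
      ∀ (n : ℕ) (p : Q₀), ∀ v ∈ K n,
        |(inner ℝ (ι v) (C (j p)) : ℝ)| ≤ ω n * ‖p‖ * ‖v‖ := by
  set B : V →L[ℝ] Q₀ →L[ℝ] ℝ := (innerSL ℝ).bilinearComp ι (C.comp j)
  have hB : ∀ v p, B v p = inner ℝ (ι v) (C (j p)) := fun _ _ => rfl
  refine ⟨fun n => ‖B.comp (K n).subtypeL‖,
    B.tendsto_opNorm_comp_subtypeL_zero K fun φ v p hv hv1 hp1 => ?_, fun n p v hv => ?_⟩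
  · obtain ⟨σ, -, u₀, hu₀, hlim⟩ := hSDCP φ v hv ⟨1, hv1⟩
    have hpairing : ∀ i, ‖B (v (σ i)) (p (σ i))‖ ≤ ‖ι (v (σ i)) - u₀‖ * ‖C.comp j‖ := fun i =>
      calc ‖B (v (σ i)) (p (σ i))‖ ≤ ‖ι (v (σ i)) - u₀‖ * ‖C (j (p (σ i)))‖ := by
            rw [hB, Real.norm_eq_abs]
            exact abs_real_inner_le_norm_sub_mul_norm (hu₀ _) _
        _ ≤ ‖ι (v (σ i)) - u₀‖ * ‖C.comp j‖ := by
            gcongr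
            exact (C.comp j).le_of_opNorm_le_of_le le_rfl (hp1 _) |>.trans_eq (mul_one _)
    refine mem_closure_of_tendsto (b := atTop) (squeeze_zero_norm hpairing ?_)
      (.of_forall fun i => ⟨σ i, rfl⟩)
    simpa using hlim.mul_const ‖C.comp j‖
  · calc |inner ℝ (ι v) (C (j p))| = ‖B.comp (K n).subtypeL ⟨v, hv⟩ p‖ := by
          rw [Real.norm_eq_abs]; rfl
      _ ≤ ‖B.comp (K n).subtypeL‖ * ‖v‖ * ‖p‖ := (B.comp (K n).subtypeL).le_opNorm₂ _ _
      _ = ‖B.comp (K n).subtypeL‖ * ‖p‖ * ‖v‖ := mul_right_comm _ _ _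

/-- Abstract form of the paper's proposition "SDCP implies WA": the strong
discrete compactness property yields the weak approximability of the space of
Lagrange multipliers. -/
theorem sdcp_implies_wa
    {H Q V Q₀ : Type*}
    [NormedAddCommGroup H] [InnerProductSpace ℝ H] [CompleteSpace H]
    [NormedAddCommGroup Q] [InnerProductSpace ℝ Q] [CompleteSpace Q]
    [NormedAddCommGroup V] [InnerProductSpace ℝ V] [CompleteSpace V]
    [NormedAddCommGroup Q₀] [NormedSpace ℝ Q₀]
    (ι : V →L[ℝ] H) (C : Q →L[ℝ] H) (j : Q₀ →L[ℝ] Q)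
    (K : ℕ → Submodule ℝ V)
    (hSDCP : ∀ (φ : ℕ → ℕ) (v : ℕ → V), (∀ k, v k ∈ K (φ k)) →
      (∃ M : ℝ, ∀ k, ‖v k‖ ≤ M) →
      ∃ σ : ℕ → ℕ, StrictMono σ ∧
        ∃ u₀ ∈ {w : H | ∀ q : Q, (inner ℝ w (C q) : ℝ) = 0},
          Tendsto (fun i => ‖ι (v (σ i)) - u₀‖) atTop (nhds 0)) :
    ∃ ω : ℕ → ℝ, Tendsto ω atTop (nhds 0) ∧
      ∀ (n : ℕ) (p : Q₀), ∀ v ∈ K n,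
        |(inner ℝ (ι v) (C (j p)) : ℝ)| ≤ ω n * ‖p‖ * ‖v‖ :=
  sdcp_implies_wa_general ι C j K hSDCP
end

section
/- In the abstract framework, assume additionally: (a) there is c₀ > 0 with ‖ι (C q)‖_H ≥ c₀ ‖q‖_Q for all q ∈ Q; (b) N ⊆ H is a closed linear subspace such that the only v ∈ V with D v = 0 and ι v ∈ N is v = 0; (c) (V_n) and (Q_n) are sequences of closed linear subspaces of V and Q with C(Q_n) ⊆ V_n for all n; (d) (B_n) is a sequence of symmetric bilinear forms on H and β₂ ≥ β₁ > 0 are constants with β₁ ‖w‖_H² ≤ B_n(w,w) ≤ β₂ ‖w‖_H² for all w ∈ H and n ∈ ℕ; set K_n := {v ∈ V_n : B_n(ι v, ι (C q)) = 0 for all q ∈ Q_n}; (e) (discrete compactness) for every φ : ℕ → ℕ and every sequence (v_k) with v_k ∈ K_{φ(k)} and sup_k ‖v_k‖_V < ∞ there exist a subsequence and u₀ ∈ N with ‖ι v_{k_j} − u₀‖_H → 0; (f) V₀ is a real normed space, κ : V₀ → V is a compact linear operator with ι(κ x) ∈ N for all x ∈ V₀, and for every u in the closure in V of the range of κ there exists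 a sequence (u^I_n) with u^I_n ∈ V_n and ‖u − u^I_n‖_V → 0. Then the strong approximability property holds: sup{ inf{ ‖κ x − w‖_V : w ∈ K_n } : x ∈ V₀, ‖x‖_{V₀} ≤ 1 } tends to 0 as n → ∞. -/
open Filter

open RealInnerProductSpace in
set_option maxHeartbeats 2000000 in
/-- Abstract form of the paper's proposition "SDCP (with the equivalence of the
discrete norms and the interpolation estimates) implies the strong
approximability (SA) of the solution space V₀". -/
theorem sdcp_implies_sa
    {H W V Q V₀ : Type*}
    [NormedAddCommGroup H] [InnerProductSpace ℝ H] [CompleteSpace H]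
    [NormedAddCommGroup W] [InnerProductSpace ℝ W] [CompleteSpace W]
    [NormedAddCommGroup V] [InnerProductSpace ℝ V] [CompleteSpace V]
    [NormedAddCommGroup Q] [InnerProductSpace ℝ Q] [CompleteSpace Q]
    [NormedAddCommGroup V₀] [NormedSpace ℝ V₀]
    (ι : V →L[ℝ] H) (D : V →L[ℝ] W) (C : Q →L[ℝ] V)
    (hnorm : ∀ v : V, ‖v‖ ^ 2 = ‖ι v‖ ^ 2 + ‖D v‖ ^ 2)
    (hDC : ∀ q : Q, D (C q) = 0)
    -- (a) Poincaré-type inequality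
    (c₀ : ℝ) (hc₀ : 0 < c₀)
    (hPoincare : ∀ q : Q, ‖ι (C q)‖ ≥ c₀ * ‖q‖)
    -- (b) rotation-free fields
    (N : Submodule ℝ H) (hNclosed : IsClosed (N : Set H))
    (hkertriv : ∀ v : V, D v = 0 → ι v ∈ N → v = 0)
    -- (c) discrete spaces
    (Vn : ℕ → Submodule ℝ V) (Qn : ℕ → Submodule ℝ Q)
    (hVnclosed : ∀ n, IsClosed ((Vn n : Set V)))
    (hQnclosed : ∀ n, IsClosed ((Qn n : Set Q)))
    (hCQ : ∀ n, ∀ q ∈ Qn n, C q ∈ Vn n)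
    -- (d) discrete bilinear forms uniformly equivalent to the H-norm
    (Bn : ℕ → H →ₗ[ℝ] H →ₗ[ℝ] ℝ)
    (hBsymm : ∀ n, ∀ x y : H, Bn n x y = Bn n y x)
    (β₁ β₂ : ℝ) (hβ₁ : 0 < β₁) (hβ₁₂ : β₁ ≤ β₂)
    (hBequiv : ∀ (n : ℕ) (w : H), β₁ * ‖w‖ ^ 2 ≤ Bn n w w ∧ Bn n w w ≤ β₂ * ‖w‖ ^ 2)
    -- the discrete rotation-free kernels
    (Kn : ℕ → Set V)
    (hKn : ∀ n, Kn n = {v : V | v ∈ Vn n ∧ ∀ q ∈ Qn n, Bn n (ι v) (ι (C q)) = 0})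
    -- (e) discrete compactness
    (hSDCP : ∀ (φ : ℕ → ℕ) (v : ℕ → V), (∀ k, v k ∈ Kn (φ k)) →
      (∃ M : ℝ, ∀ k, ‖v k‖ ≤ M) →
      ∃ σ : ℕ → ℕ, StrictMono σ ∧ ∃ u₀ ∈ N,
        Tendsto (fun i => ‖ι (v (σ i)) - u₀‖) atTop (nhds 0))
    -- (f) the solution space, compactly embedded and rotation free,
    --     together with the interpolation/approximation property
    (κ : V₀ →ₗ[ℝ] V) (hκcompact : IsCompactOperator κ)
    (hκN : ∀ x : V₀, ι (κ x) ∈ N)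
    (happrox : ∀ u ∈ closure (Set.range κ), ∃ uI : ℕ → V,
      (∀ n, uI n ∈ Vn n) ∧ Tendsto (fun n => ‖u - uI n‖) atTop (nhds 0)) :
    -- strong approximability
    Tendsto (fun n => sSup ((fun x => sInf ((fun w => ‖κ x - w‖) '' (Kn n))) '' {x : V₀ | ‖x‖ ≤ 1}))
      atTop (nhds 0) := by
  have hβ₂ : (0:ℝ) < β₂ := hβ₁.trans_le hβ₁₂
  -- Cauchy-Schwarz for the discrete forms
  have hBnonneg : ∀ (n : ℕ) (x : H), 0 ≤ Bn n x x := fun n x =>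
    le_trans (by positivity) (hBequiv n x).1
  have hCS : ∀ (n : ℕ) (x y : H), |Bn n x y| ≤ β₂ * (‖x‖ * ‖y‖) := by
    intro n x y
    have key : (Bn n x y) ^ 2 ≤ Bn n x x * Bn n y y := by
      have h : ∀ t : ℝ, 0 ≤ Bn n y y * (t * t) + (2 * Bn n x y) * t + Bn n x x := by
        intro t
        have h0 := hBnonneg n (x + t • y)
        have hexp : Bn n (x + t • y) (x + t • y)
            = Bn n x x + 2 * Bn n x y * t + Bn n y y * (t * t) := by
          simp only [map_add, map_smul, LinearMap.add_apply, LinearMap.smul_apply,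
            smul_eq_mul]
          rw [hBsymm n y x]; ring
        rw [hexp] at h0; linarith
      have hd : discrim (Bn n y y) (2 * Bn n x y) (Bn n x x) ≤ 0 := discrim_le_zero h
      rw [discrim] at hd; nlinarith
    have h1 := (hBequiv n x).2
    have h2 := (hBequiv n y).2
    have hx := hBnonneg n x
    have hy := hBnonneg n y
    have hR : (0:ℝ) ≤ β₂ * (‖x‖ * ‖y‖) := by positivity
    have hsq : (Bn n x y) ^ 2 ≤ (β₂ * (‖x‖ * ‖y‖)) ^ 2 := by nlinarith [norm_nonneg x, norm_nonneg y]
    nlinarith [abs_nonneg (Bn n x y), sq_abs (Bn n x y)]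
  -- bound for the composite map
  have hT : ∀ q : Q, ‖ι (C q)‖ ≤ ‖ι‖ * ‖C‖ * ‖q‖ := by
    intro q
    calc ‖ι (C q)‖ ≤ ‖ι‖ * ‖C q‖ := ι.le_opNorm _
      _ ≤ ‖ι‖ * (‖C‖ * ‖q‖) := by gcongr; exact C.le_opNorm _
      _ = ‖ι‖ * ‖C‖ * ‖q‖ := by ring
  -- solvability of the discrete mixed problems (Lax–Milgram)
  have hsol : ∀ (n : ℕ) (g : H), ∃ p ∈ Qn n, ∀ q ∈ Qn n,
      Bn n (ι (C p)) (ι (C q)) = Bn n g (ι (C q)) := by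
    intro n g
    haveI := (hQnclosed n).completeSpace_coe
    set A : ℝ := ‖ι‖ * ‖C‖ with hA
    have hA0 : 0 ≤ A := by positivity
    set b : ↥(Qn n) →ₗ[ℝ] ↥(Qn n) →ₗ[ℝ] ℝ :=
      LinearMap.mk₂ ℝ (fun p q => Bn n (ι (C (p : Q))) (ι (C (q : Q))))
        (fun p p' q => by
          simp only [Submodule.coe_add, map_add, LinearMap.add_apply])
        (fun c p q => by
          simp only [Submodule.coe_smul, map_smul, LinearMap.smul_apply])
        (fun p q q' => by
          simp only [Submodule.coe_add, map_add, LinearMap.add_apply])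
        (fun c p q => by
          simp only [Submodule.coe_smul, map_smul, LinearMap.smul_apply]) with hbdef
    have hbound : ∀ p q : ↥(Qn n), ‖b p q‖ ≤ (β₂ * A * A) * ‖p‖ * ‖q‖ := by
      intro p q
      have h1 := hCS n (ι (C (p : Q))) (ι (C (q : Q)))
      have h2 := hT (p : Q)
      have h3 := hT (q : Q)
      have hnp : ‖(p : Q)‖ = ‖p‖ := rfl
      have hnq : ‖(q : Q)‖ = ‖q‖ := rfl
      rw [hnp] at h2; rw [hnq] at h3
      calc ‖b p q‖ = |Bn n (ι (C (p : Q))) (ι (C (q : Q)))| := by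
            rw [hbdef]; simp [Real.norm_eq_abs]
        _ ≤ β₂ * (‖ι (C (p : Q))‖ * ‖ι (C (q : Q))‖) := h1
        _ ≤ β₂ * ((A * ‖p‖) * (A * ‖q‖)) := by
            have hpq : ‖ι (C (p : Q))‖ * ‖ι (C (q : Q))‖ ≤ (A * ‖p‖) * (A * ‖q‖) :=
              mul_le_mul h2 h3 (norm_nonneg _) (by positivity)
            exact mul_le_mul_of_nonneg_left hpq hβ₂.le
        _ = (β₂ * A * A) * ‖p‖ * ‖q‖ := by ring
    set Bc : ↥(Qn n) →L[ℝ] ↥(Qn n) →L[ℝ] ℝ := b.mkContinuous₂ (β₂ * A * A) hbound with hBc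
    have hBcapp : ∀ p q : ↥(Qn n), Bc p q = Bn n (ι (C (p : Q))) (ι (C (q : Q))) := by
      intro p q
      rw [hBc, LinearMap.mkContinuous₂_apply, hbdef]
      rfl
    have coercive : IsCoercive Bc := by
      refine ⟨β₁ * (c₀ * c₀), by positivity, fun p => ?_⟩
      have h1 := (hBequiv n (ι (C (p : Q)))).1
      have h2 := hPoincare (p : Q)
      have key : β₁ * (c₀ * c₀) * ‖(p : Q)‖ * ‖(p : Q)‖
          ≤ Bn n (ι (C (p : Q))) (ι (C (p : Q))) := by
        nlinarith [mul_le_mul h2 h2 (by positivity) (norm_nonneg (ι (C (p : Q)))),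
          norm_nonneg (p : Q), norm_nonneg (ι (C (p : Q)))]
      rw [hBcapp p p, Submodule.coe_norm p]
      exact key
    -- the right-hand side functional
    set fl : ↥(Qn n) →ₗ[ℝ] ℝ :=
      { toFun := fun q => Bn n g (ι (C (q : Q)))
        map_add' := fun q q' => by
          simp only [Submodule.coe_add, map_add, LinearMap.add_apply]
        map_smul' := fun c q => by
          simp only [Submodule.coe_smul, map_smul, LinearMap.smul_apply, RingHom.id_apply] } with hfl
    have hflbound : ∀ q : ↥(Qn n), ‖fl q‖ ≤ (β₂ * ‖g‖ * A) * ‖q‖ := by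
      intro q
      have h1 := hCS n g (ι (C (q : Q)))
      have h3 := hT (q : Q)
      have hnq : ‖(q : Q)‖ = ‖q‖ := rfl
      rw [hnq] at h3
      calc ‖fl q‖ = |Bn n g (ι (C (q : Q)))| := by
            rw [hfl]; simp [Real.norm_eq_abs]
        _ ≤ β₂ * (‖g‖ * ‖ι (C (q : Q))‖) := h1
        _ ≤ β₂ * (‖g‖ * (A * ‖q‖)) := by gcongr
        _ = (β₂ * ‖g‖ * A) * ‖q‖ := by ring
    set f : ↥(Qn n) →L[ℝ] ℝ := fl.mkContinuous (β₂ * ‖g‖ * A) hflbound with hf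
    set y : ↥(Qn n) := (InnerProductSpace.toDual ℝ ↥(Qn n)).symm f with hy
    set p : ↥(Qn n) := coercive.continuousLinearEquivOfBilin.symm y with hp
    have hkey : ∀ q : ↥(Qn n), Bc p q = f q := by
      intro q
      have h1 : ⟪coercive.continuousLinearEquivOfBilin p, q⟫ = Bc p q :=
        coercive.continuousLinearEquivOfBilin_apply p q
      rw [hp, ContinuousLinearEquiv.apply_symm_apply] at h1
      rw [← h1, hy, InnerProductSpace.toDual_symm_apply]
    refine ⟨(p : Q), p.2, fun q hq => ?_⟩
    have := hkey ⟨q, hq⟩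
    rw [hBcapp] at this
    exact this
  -- strong approximation of each element of the closure of the range of κ
  have L1 : ∀ u ∈ closure (Set.range κ), ∃ w : ℕ → V,
      (∀ n, w n ∈ Kn n) ∧ Tendsto (fun n => ‖u - w n‖) atTop (nhds 0) := by
    intro u hu
    obtain ⟨uI, huImem, huIconv⟩ := happrox u hu
    choose p hpmem hpeq using fun n => hsol n (ι (uI n))
    set z : ℕ → V := fun n => C (p n) with hzdef
    set w : ℕ → V := fun n => uI n - z n with hwdef
    have hDz : ∀ n, D (z n) = 0 := fun n => hDC (p n)
    have hznorm : ∀ n, ‖z n‖ = ‖ι (z n)‖ := by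
      intro n
      have h := hnorm (z n)
      rw [hDz n, norm_zero] at h
      calc ‖z n‖ = Real.sqrt (‖z n‖ ^ 2) := (Real.sqrt_sq (norm_nonneg _)).symm
        _ = Real.sqrt (‖ι (z n)‖ ^ 2) := by rw [h]; norm_num
        _ = ‖ι (z n)‖ := Real.sqrt_sq (norm_nonneg _)
    have hwK : ∀ n, w n ∈ Kn n := by
      intro n
      rw [hKn n]
      refine ⟨Submodule.sub_mem _ (huImem n) (hCQ n _ (hpmem n)), fun q hq => ?_⟩
      have e : ι (w n) = ι (uI n) - ι (z n) := map_sub ι _ _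
      rw [e, map_sub, LinearMap.sub_apply]
      have := hpeq n q hq
      rw [show z n = C (p n) from rfl, this, sub_self]
    -- uniform bounds
    obtain ⟨M₀', hM₀'⟩ := huIconv.bddAbove_range
    have hM₀'mem : ∀ n, ‖u - uI n‖ ≤ M₀' := fun n => hM₀' (Set.mem_range_self n)
    set M₀ : ℝ := ‖u‖ + M₀' with hM₀def
    have hM₀ : ∀ n, ‖uI n‖ ≤ M₀ := by
      intro n
      have : ‖uI n‖ ≤ ‖u‖ + ‖u - uI n‖ := by
        calc ‖uI n‖ = ‖u - (u - uI n)‖ := by rw [sub_sub_cancel]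
          _ ≤ ‖u‖ + ‖u - uI n‖ := norm_sub_le _ _
      linarith [hM₀'mem n]
    have hM₀0 : 0 ≤ M₀ := le_trans (norm_nonneg _) (hM₀ 0)
    have hιz_le : ∀ n, ‖ι (z n)‖ ≤ β₂ / β₁ * (‖ι‖ * M₀) := by
      intro n
      have h1 := (hBequiv n (ι (z n))).1
      have h2 := hpeq n (p n) (hpmem n)
      have h3 := hCS n (ι (uI n)) (ι (z n))
      have h4 : ‖ι (uI n)‖ ≤ ‖ι‖ * M₀ := by
        calc ‖ι (uI n)‖ ≤ ‖ι‖ * ‖uI n‖ := ι.le_opNorm _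
          _ ≤ ‖ι‖ * M₀ := by gcongr; exact hM₀ n
      have hkey : β₁ * ‖ι (z n)‖ ^ 2 ≤ β₂ * (‖ι‖ * M₀) * ‖ι (z n)‖ := by
        have e1 : Bn n (ι (z n)) (ι (z n)) = Bn n (ι (uI n)) (ι (z n)) := h2
        have : β₁ * ‖ι (z n)‖ ^ 2 ≤ Bn n (ι (uI n)) (ι (z n)) := by rw [← e1]; exact h1
        have h5 : Bn n (ι (uI n)) (ι (z n)) ≤ β₂ * (‖ι (uI n)‖ * ‖ι (z n)‖) :=
          le_trans (le_abs_self _) h3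
        nlinarith [mul_le_mul_of_nonneg_right h4 (norm_nonneg (ι (z n))), hβ₂,
          norm_nonneg (ι (z n))]
      rcases eq_or_lt_of_le (norm_nonneg (ι (z n))) with h0 | h0
      · rw [← h0]; positivity
      · rw [div_mul_eq_mul_div, le_div_iff₀ hβ₁]
        nlinarith [hkey, h0]
    set M₁ : ℝ := β₂ / β₁ * (‖ι‖ * M₀) with hM₁def
    have hM₁0 : 0 ≤ M₁ := le_trans (norm_nonneg _) (hιz_le 0)
    have hz_le : ∀ n, ‖z n‖ ≤ M₁ := fun n => by rw [hznorm n]; exact hιz_le n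
    have hw_le : ∀ n, ‖w n‖ ≤ M₀ + M₁ := by
      intro n
      calc ‖w n‖ ≤ ‖uI n‖ + ‖z n‖ := norm_sub_le _ _
        _ ≤ M₀ + M₁ := add_le_add (hM₀ n) (hz_le n)
    have hιuN : ι u ∈ N := by
      have hsub : Set.range ⇑κ ⊆ ⇑ι ⁻¹' (N : Set H) := by
        rintro _ ⟨x, rfl⟩; exact hκN x
      exact closure_minimal hsub (hNclosed.preimage ι.continuous) hu
    -- the curl corrections tend to zero
    have hzto0 : Tendsto (fun n => ‖z n‖) atTop (nhds 0) := by
      apply tendsto_of_subseq_tendsto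
      intro ns hns
      obtain ⟨σ, hσ, u₀, hu₀N, hconv⟩ :=
        hSDCP ns (fun k => w (ns k)) (fun k => hwK (ns k)) ⟨M₀ + M₁, fun k => hw_le _⟩
      refine ⟨σ, ?_⟩
      set m : ℕ → ℕ := fun i => ns (σ i) with hm
      have hmtop : Tendsto m atTop atTop := hns.comp hσ.tendsto_atTop
      have h1 : Tendsto (fun i => ι (w (m i))) atTop (nhds u₀) := by
        rw [tendsto_iff_norm_sub_tendsto_zero]
        exact hconv
      have h2 : Tendsto (fun i => uI (m i)) atTop (nhds u) := by
        rw [tendsto_iff_norm_sub_tendsto_zero]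
        have := huIconv.comp hmtop
        simpa [norm_sub_rev, Function.comp_def] using this
      have h3 : Tendsto (fun i => ι (z (m i))) atTop (nhds (ι u - u₀)) := by
        have e : (fun i => ι (z (m i))) = fun i => ι (uI (m i)) - ι (w (m i)) := by
          funext i
          rw [← map_sub]
          congr 1
          simp only [hwdef, hzdef]
          abel
        rw [e]
        exact ((ι.continuous.tendsto u).comp h2).sub h1
      have hdists : ∀ a b : ℕ, dist (z (m a)) (z (m b)) = dist (ι (z (m a))) (ι (z (m b))) := by
        intro a b
        have hD0 : D (z (m a) - z (m b)) = 0 := by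
          rw [map_sub, hDz, hDz, sub_zero]
        have h := hnorm (z (m a) - z (m b))
        rw [hD0, norm_zero] at h
        have h' : ‖z (m a) - z (m b)‖ = ‖ι (z (m a) - z (m b))‖ := by
          calc ‖z (m a) - z (m b)‖ = Real.sqrt (‖z (m a) - z (m b)‖ ^ 2) :=
                (Real.sqrt_sq (norm_nonneg _)).symm
            _ = Real.sqrt (‖ι (z (m a) - z (m b))‖ ^ 2) := by rw [h]; norm_num
            _ = ‖ι (z (m a) - z (m b))‖ := Real.sqrt_sq (norm_nonneg _)
        rw [dist_eq_norm, dist_eq_norm, h', map_sub]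
      have hcau : CauchySeq (fun i => z (m i)) := by
        have hc := h3.cauchySeq
        rw [Metric.cauchySeq_iff] at hc ⊢
        intro ε hε
        obtain ⟨Nn, hNn⟩ := hc ε hε
        exact ⟨Nn, fun a ha b hb => by rw [hdists]; exact hNn a ha b hb⟩
      obtain ⟨zL, hzL⟩ := cauchySeq_tendsto_of_complete hcau
      have hizL : ι zL = ι u - u₀ :=
        tendsto_nhds_unique ((ι.continuous.tendsto _).comp hzL) h3
      have hDzL : D zL = 0 := by
        have h4 : Tendsto (fun i => D (z (m i))) atTop (nhds (D zL)) :=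
          (D.continuous.tendsto _).comp hzL
        have h5 : (fun i => D (z (m i))) = fun _ => (0 : W) := funext fun i => hDz (m i)
        rw [h5] at h4
        exact tendsto_nhds_unique h4 tendsto_const_nhds
      have hzL0 : zL = 0 :=
        hkertriv zL hDzL (by rw [hizL]; exact Submodule.sub_mem N hιuN hu₀N)
      rw [hzL0] at hzL
      simpa using hzL.norm
    refine ⟨w, hwK, ?_⟩
    have hb : ∀ n, ‖u - w n‖ ≤ ‖u - uI n‖ + ‖z n‖ := by
      intro n
      have e : u - w n = (u - uI n) + z n := by rw [hwdef]; beta_reduce; abel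
      rw [e]
      exact norm_add_le _ _
    have hsum : Tendsto (fun n => ‖u - uI n‖ + ‖z n‖) atTop (nhds 0) := by
      simpa using huIconv.add hzto0
    exact squeeze_zero (fun n => norm_nonneg _) hb hsum
  -- total boundedness of the image of the unit ball
  obtain ⟨K, hKcompact, hKsub⟩ := hκcompact.image_closedBall_subset_compact (𝕜₁ := ℝ) 1
  have hTB : TotallyBounded (⇑κ '' Metric.closedBall 0 1) :=
    TotallyBounded.subset hKsub hKcompact.totallyBounded
  -- conclusion
  rw [Metric.tendsto_atTop]
  intro ε hε
  obtain ⟨t, hts, htfin, hcover⟩ := totallyBounded_iff_subset.mp hTB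
    {p : V × V | dist p.1 p.2 < ε / 3} (Metric.dist_mem_uniformity (by positivity))
  have hchoice : ∀ y : V, y ∈ t → ∃ w : ℕ → V,
      (∀ n, w n ∈ Kn n) ∧ Tendsto (fun n => ‖y - w n‖) atTop (nhds 0) := by
    intro y hy
    apply L1
    apply subset_closure
    rcases hts hy with ⟨x, _, rfl⟩
    exact Set.mem_range_self x
  choose! wt hwtK hwtconv using hchoice
  have hev : ∀ᶠ n in atTop, ∀ y ∈ t, ‖y - wt y n‖ < ε / 3 := by
    rw [Filter.eventually_all_finite htfin]
    intro y hy
    exact (hwtconv y hy).eventually (gt_mem_nhds (by positivity : (0:ℝ) < ε / 3))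
  obtain ⟨Nb, hNb⟩ := Filter.eventually_atTop.mp hev
  refine ⟨Nb, fun n hn => ?_⟩
  have hinf_nonneg : ∀ x : V₀, 0 ≤ sInf ((fun w => ‖κ x - w‖) '' (Kn n)) := fun x =>
    Real.sInf_nonneg (by rintro _ ⟨w, _, rfl⟩; exact norm_nonneg _)
  have hS0 : 0 ≤ sSup ((fun x => sInf ((fun w => ‖κ x - w‖) '' (Kn n))) '' {x : V₀ | ‖x‖ ≤ 1}) :=
    Real.sSup_nonneg (by rintro _ ⟨x, _, rfl⟩; exact hinf_nonneg x)
  have hSle : sSup ((fun x => sInf ((fun w => ‖κ x - w‖) '' (Kn n))) '' {x : V₀ | ‖x‖ ≤ 1})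
      ≤ 2 * ε / 3 := by
    refine Real.sSup_le ?_ (by positivity)
    rintro _ ⟨x, hx, rfl⟩
    -- x has norm at most 1
    have hκx : κ x ∈ ⇑κ '' Metric.closedBall 0 1 :=
      Set.mem_image_of_mem _ (by simpa [Metric.mem_closedBall, dist_zero_right] using hx)
    obtain ⟨y, hy, hxy⟩ := Set.mem_iUnion₂.mp (hcover hκx)
    have hxy' : dist (κ x) y < ε / 3 := hxy
    have hyw : ‖y - wt y n‖ < ε / 3 := hNb n hn y hy
    have hbdd : BddBelow ((fun w => ‖κ x - w‖) '' Kn n) := by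
      refine ⟨0, ?_⟩
      rintro _ ⟨w, _, rfl⟩
      exact norm_nonneg _
    calc sInf ((fun w => ‖κ x - w‖) '' Kn n) ≤ ‖κ x - wt y n‖ :=
          csInf_le hbdd ⟨wt y n, hwtK y hy n, rfl⟩
      _ ≤ ‖κ x - y‖ + ‖y - wt y n‖ := by
          have e : κ x - wt y n = (κ x - y) + (y - wt y n) := by abel
          rw [e]; exact norm_add_le _ _
      _ ≤ ε / 3 + ε / 3 := by
          refine add_le_add ?_ hyw.le
          rw [← dist_eq_norm]
          exact hxy'.le
      _ = 2 * ε / 3 := by ring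
  rw [Real.dist_eq, sub_zero, abs_of_nonneg hS0]
  linarith
end

section
/- Let H and W be real Hilbert spaces, V a real Hilbert space with continuous linear maps ι : V → H and D : V → W, let Z be a real normed space, j : Z → H a compact linear operator, and N ⊆ H a closed set. Let (v_k) be a sequence in V with sup_k ‖v_k‖_V < ∞ (where ‖v‖_V² = ‖ι v‖_H² + ‖D v‖_W²), and suppose there are a constant C > 0, a sequence ε_k → 0, and decompositions ι v_k = j z_k + ψ_k with j z_k ∈ N, ‖z_k‖_Z ≤ C ‖D v_k‖_W, and ‖ψ_k‖_H ≤ C ε_k ‖D v_k‖_W for all k. Then there exist a subsequence (v_{k_j}) and u₀ ∈ N with ‖ι v_{k_j} − u₀‖_H → 0. -/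
open Filter

/-- Abstract form of the paper's theorem asserting the strong discrete
compactness property of the virtual element spaces: a bounded sequence in V
admitting a discrete Helmholtz decomposition through a compactly embedded
space Z has a subsequence whose image under ι converges in H to a limit in
the closed set N of rotation-free fields. -/
theorem strong_discrete_compactness
    {H W V Z : Type*}
    [NormedAddCommGroup H] [InnerProductSpace ℝ H] [CompleteSpace H]
    [NormedAddCommGroup W] [InnerProductSpace ℝ W] [CompleteSpace W]
    [NormedAddCommGroup V] [InnerProductSpace ℝ V] [CompleteSpace V]
    [NormedAddCommGroup Z] [NormedSpace ℝ Z]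
    (ι : V →L[ℝ] H) (D : V →L[ℝ] W)
    (hnorm : ∀ v : V, ‖v‖ ^ 2 = ‖ι v‖ ^ 2 + ‖D v‖ ^ 2)
    (j : Z →ₗ[ℝ] H) (hjcompact : IsCompactOperator j)
    (N : Set H) (hNclosed : IsClosed N)
    (v : ℕ → V) (hbound : ∃ M : ℝ, ∀ k, ‖v k‖ ≤ M)
    (C : ℝ) (hC : 0 < C)
    (ε : ℕ → ℝ) (hε : Tendsto ε atTop (nhds 0))
    (z : ℕ → Z) (ψ : ℕ → H)
    (hdecomp : ∀ k, ι (v k) = j (z k) + ψ k)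
    (hzN : ∀ k, j (z k) ∈ N)
    (hz : ∀ k, ‖z k‖ ≤ C * ‖D (v k)‖)
    (hψ : ∀ k, ‖ψ k‖ ≤ C * ε k * ‖D (v k)‖) :
    ∃ σ : ℕ → ℕ, StrictMono σ ∧ ∃ u₀ ∈ N,
      Tendsto (fun i => ‖ι (v (σ i)) - u₀‖) atTop (nhds 0) := by
  obtain ⟨M, hM⟩ := hbound
  have hDv : ∀ k, ‖D (v k)‖ ≤ M := by
    intro k
    have h1 : ‖D (v k)‖ ≤ ‖v k‖ := by
      have := hnorm (v k)
      nlinarith [sq_nonneg ‖ι (v k)‖, norm_nonneg (v k), norm_nonneg (D (v k))]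
    exact h1.trans (hM k)
  -- z is in the closed ball of radius C*M
  have hzball : ∀ k, z k ∈ Metric.closedBall (0 : Z) (C * M) := by
    intro k
    simpa [Metric.mem_closedBall, dist_zero_right] using
      (hz k).trans (by nlinarith [hDv k])
  have hK : IsCompact (closure <| j '' Metric.closedBall 0 (C * M)) :=
    hjcompact.isCompact_closure_image_closedBall (C * M)
  have hmem : ∀ k, j (z k) ∈ closure (j '' Metric.closedBall 0 (C * M)) := fun k =>
    subset_closure ⟨z k, hzball k, rfl⟩
  obtain ⟨u₀, -, σ, hσ, hconv⟩ := hK.tendsto_subseq hmem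
  -- ψ → 0
  have hψ0 : Tendsto (fun k => ψ k) atTop (nhds (0 : H)) := by
    rw [tendsto_zero_iff_norm_tendsto_zero]
    have hub : Tendsto (fun k => C * |ε k| * M) atTop (nhds 0) := by
      have : Tendsto (fun k => C * |ε k| * M) atTop (nhds (C * |(0:ℝ)| * M)) :=
        ((tendsto_const_nhds.mul (hε.abs)).mul tendsto_const_nhds)
      simpa using this
    refine squeeze_zero (fun k => norm_nonneg _) (fun k => (hψ k).trans ?_) hub
    have h1 : C * ε k ≤ C * |ε k| := by
      have := le_abs_self (ε k); nlinarith
    have h2 : (0:ℝ) ≤ ‖D (v k)‖ := norm_nonneg _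
    calc C * ε k * ‖D (v k)‖ ≤ C * |ε k| * ‖D (v k)‖ :=
          mul_le_mul_of_nonneg_right h1 h2
      _ ≤ C * |ε k| * M := by
          refine mul_le_mul_of_nonneg_left (hDv k) ?_
          positivity
  refine ⟨σ, hσ, u₀, hNclosed.mem_of_tendsto hconv (Eventually.of_forall fun i => hzN _), ?_⟩
  rw [← tendsto_zero_iff_norm_tendsto_zero]
  have : Tendsto (fun i => (j (z (σ i)) - u₀) + ψ (σ i)) atTop (nhds (0 + 0 : H)) := by
    refine Tendsto.add ?_ (hψ0.comp hσ.tendsto_atTop)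
    simpa using hconv.sub_const u₀
  simpa [hdecomp, sub_add_eq_add_sub] using this
end

section
/- Let A₁, A₂, A₃ ∈ ℝ² be affinely independent, let T be their convex hull (a nondegenerate triangle), and for i ∈ {1,2,3} let e_i be the edge of T opposite the vertex A_i, |e_i| its length, and n_i the outward unit normal to e_i (the unit vector orthogonal to the direction of e_i with ⟨n_i, A_i − m⟩ < 0 for m ∈ e_i). Let v : ℝ² → ℝ² be the lowest-order Raviart–Thomas field v(x) = a + c·x with a ∈ ℝ² and c ∈ ℝ; then x ↦ ⟨v(x), n_i⟩ is constant on e_i, with value denoted (v·n_i). If ∫_T v(x) dx = 0 (equivalently, ∫_T ⟨v(x), ∇q⟩ dx = 0 for every affine q : ℝ² → ℝ), then the three scaled edge fluxes coincide: (v·n₁)|e₁| = (v·n₂)|e₂| = (v·n₃)|e₃|; if moreover ⟨v(x), n_i⟩ = 0 for all x on some edge e_i, then a = 0 and c = 0, i.e. v is identically zero. -/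
/-!
The affine map cycling the vertices of `T` has a linear part `L` with `1 + L + L² = 0`; hence
`L³ = 1`, `|det L| = 1`, and the change of variables by this map shows that `∫_T (x - G)` (with `G`
the centroid) is fixed by `L`, so it vanishes. Therefore `∫_T v = |T| • v G`, so `v G = 0` and
`v x = c • (x - G)`. The normal flux through the edge `e_i` is then `c h_i / 3`, where `h_i` is the
height of `T` onto `e_i`, and `h_i |e_i|` equals the absolute value of the area form on two edge
vectors, which does not depend on `i`.
-/

open MeasureTheory Set Finset

theorem Fin.sum_univ_three_rotate {M : Type*} [AddCommMonoid M] (f : Fin 3 → M) (i : Fin 3) :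
    ∑ j, f j = f i + f (i + 1) + f (i + 2) := by
  fin_cases i <;> simp [Fin.sum_univ_three] <;> abel

theorem three_smul_centroid_fin_three {E : Type*} [AddCommGroup E] [Module ℝ E] (A : Fin 3 → E) :
    (3 : ℝ) • univ.centroid ℝ A = ∑ i, A i := by
  rw [centroid_def, affineCombination_eq_linear_combination _ _ _
    (sum_centroidWeights_eq_one_of_nonempty ℝ _ univ_nonempty), Finset.smul_sum]
  simp [smul_smul]

namespace AffineBasis

variable {E : Type*} [NormedAddCommGroup E] [NormedSpace ℝ E] (b : AffineBasis (Fin 3) ℝ E)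

-- The linear part of the affine map sending `b j` to `b (j + 1)`.
noncomputable def cycleLinear : E →ₗ[ℝ] E :=
  (b.basisOf 0).constr ℝ fun j => b (j + 1) - b 1

theorem cycleLinear_sub (j : Fin 3) : b.cycleLinear (b j - b 0) = b (j + 1) - b 1 := by
  by_cases hj : j = 0
  · subst hj; simp
  · have h := (b.basisOf 0).constr_basis ℝ (fun j => b (j + 1) - b 1) ⟨j, hj⟩
    rwa [basisOf_apply, vsub_eq_sub] at h

theorem cycleLinear_sub_centroid (j : Fin 3) :
    b.cycleLinear (b j - univ.centroid ℝ b) = b (j + 1) - univ.centroid ℝ b := by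
  have hG : univ.centroid ℝ b = (3 : ℝ)⁻¹ • ∑ i, b i := by
    rw [← three_smul_centroid_fin_three, smul_smul]; norm_num
  have hcentred : b j - univ.centroid ℝ b
      = (b j - b 0) - (3 : ℝ)⁻¹ • ((b 1 - b 0) + (b 2 - b 0)) := by
    rw [hG, Fin.sum_univ_three]; module
  rw [hcentred, map_sub, map_smul, map_add, cycleLinear_sub, cycleLinear_sub, cycleLinear_sub, hG,
    Fin.sum_univ_three]
  simp only [show (1 + 1 : Fin 3) = 2 from rfl, show (2 + 1 : Fin 3) = 0 from rfl]
  module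

theorem add_cycleLinear_add_cycleLinear (x : E) :
    x + b.cycleLinear x + b.cycleLinear (b.cycleLinear x) = 0 := by
  set L := b.cycleLinear
  have hvertex : ∀ j, (LinearMap.id + L + L ∘ₗ L : E →ₗ[ℝ] E) (b j - univ.centroid ℝ b) = 0 := by
    intro j
    simp only [LinearMap.add_apply, LinearMap.id_apply, LinearMap.comp_apply, L,
      cycleLinear_sub_centroid]
    rw [add_assoc j, show (1 + 1 : Fin 3) = 2 from rfl]
    linear_combination (norm := module)
      (Fin.sum_univ_three_rotate b j).symm - three_smul_centroid_fin_three b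
  have hzero : (LinearMap.id + L + L ∘ₗ L : E →ₗ[ℝ] E) = 0 := by
    refine (b.basisOf 0).ext fun j => ?_
    rw [basisOf_apply, vsub_eq_sub, ← sub_sub_sub_cancel_right _ _ (univ.centroid ℝ b), map_sub,
      hvertex, hvertex, sub_zero, LinearMap.zero_apply]
  simpa using LinearMap.congr_fun hzero x

theorem cycleLinear_cycleLinear_cycleLinear (x : E) :
    b.cycleLinear (b.cycleLinear (b.cycleLinear x)) = x := by
  have h := b.add_cycleLinear_add_cycleLinear x
  have hL := congrArg b.cycleLinear h
  rw [map_add, map_add, map_zero] at hL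
  linear_combination (norm := module) hL - h

theorem cycleLinear_injective : Function.Injective b.cycleLinear :=
  Function.LeftInverse.injective (g := fun x => b.cycleLinear (b.cycleLinear x))
    b.cycleLinear_cycleLinear_cycleLinear

theorem abs_det_cycleLinear [FiniteDimensional ℝ E] : |LinearMap.det b.cycleLinear| = 1 := by
  have hcube : b.cycleLinear ^ 3 = 1 := LinearMap.ext b.cycleLinear_cycleLinear_cycleLinear
  have h := congrArg LinearMap.det hcube
  rw [map_pow, map_one] at h
  rw [← pow_eq_one_iff_of_nonneg (abs_nonneg _) three_ne_zero, ← abs_pow, h, abs_one]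

noncomputable def cycle : E →ᵃ[ℝ] E where
  toFun x := b.cycleLinear (x - univ.centroid ℝ b) + univ.centroid ℝ b
  linear := b.cycleLinear
  map_vadd' p v := by simp only [vadd_eq_add, add_sub_assoc, map_add]; abel

theorem cycle_apply (x : E) :
    b.cycle x = b.cycleLinear (x - univ.centroid ℝ b) + univ.centroid ℝ b :=
  rfl

theorem cycle_vertex (j : Fin 3) : b.cycle (b j) = b (j + 1) := by
  rw [cycle_apply, cycleLinear_sub_centroid, sub_add_cancel]

theorem image_cycle_convexHull : b.cycle '' convexHull ℝ (range b) = convexHull ℝ (range b) := by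
  rw [AffineMap.image_convexHull, ← range_comp]
  have : ⇑b.cycle ∘ b = b ∘ fun j => j + 1 := funext b.cycle_vertex
  rw [this, (add_right_surjective 1).range_comp]

variable [FiniteDimensional ℝ E] [MeasurableSpace E] (μ : Measure E) [μ.IsAddHaarMeasure]

theorem measureReal_convexHull_pos : 0 < μ.real (convexHull ℝ (range b)) := by
  refine ENNReal.toReal_pos (μ.measure_pos_of_nonempty_interior ?_).ne'
    ((finite_range b).isCompact_convexHull (𝕜 := ℝ)).measure_lt_top.ne
  rw [(convex_convexHull ℝ _).interior_nonempty_iff_affineSpan_eq_top, affineSpan_convexHull, b.tot]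

variable [BorelSpace E]

theorem setIntegral_convexHull_sub_centroid :
    ∫ x in convexHull ℝ (range b), (x - univ.centroid ℝ b) ∂μ = 0 := by
  set T := convexHull ℝ (range b)
  set G := univ.centroid ℝ b
  set L := b.cycleLinear
  have hT : IsCompact T := (finite_range b).isCompact_convexHull (𝕜 := ℝ)
  have hderiv : ∀ x ∈ T, HasFDerivWithinAt b.cycle L.toContinuousLinearMap T x := fun x _ => by
    rw [show ⇑b.cycle = fun x => L (x - G) + G from funext b.cycle_apply]
    simpa using
      ((L.toContinuousLinearMap.hasFDerivAt).comp x ((hasFDerivAt_id x).sub_const G)).add_const G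
      |>.hasFDerivWithinAt
  have hinj : InjOn b.cycle T :=
    ((AffineMap.linear_injective_iff b.cycle).mp b.cycleLinear_injective).injOn
  have hfixed : ∫ x in T, (x - G) ∂μ = L (∫ x in T, (x - G) ∂μ) := by
    calc ∫ x in T, (x - G) ∂μ = ∫ x in b.cycle '' T, (x - G) ∂μ := by rw [image_cycle_convexHull]
      _ = ∫ x in T, |L.toContinuousLinearMap.det| • (b.cycle x - G) ∂μ :=
        integral_image_eq_integral_abs_det_fderiv_smul μ hT.measurableSet hderiv hinj _
      _ = ∫ x in T, L.toContinuousLinearMap (x - G) ∂μ := by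
        have hcycle (x : E) : b.cycle x - G = L (x - G) := by
          rw [cycle_apply, add_sub_cancel_right]
        simp only [ContinuousLinearMap.det, LinearMap.coe_toContinuousLinearMap,
          LinearMap.coe_toContinuousLinearMap', L,
          b.abs_det_cycleLinear, one_smul, hcycle]
      _ = L (∫ x in T, (x - G) ∂μ) :=
        L.toContinuousLinearMap.integral_comp_comm
          ((continuous_id.sub continuous_const).continuousOn.integrableOn_compact hT)
  have h3 := b.add_cycleLinear_add_cycleLinear (∫ x in T, (x - G) ∂μ)
  rw [← hfixed, ← hfixed] at h3
  have : (3 : ℝ) • ∫ x in T, (x - G) ∂μ = 0 := by linear_combination (norm := module) h3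
  exact (smul_eq_zero.mp this).resolve_left three_ne_zero

theorem add_smul_centroid_eq_zero {a : E} {c : ℝ}
    (h : ∫ x in convexHull ℝ (range b), (a + c • x) ∂μ = 0) : a + c • univ.centroid ℝ b = 0 := by
  set T := convexHull ℝ (range b)
  set G := univ.centroid ℝ b
  have hT : IsCompact T := (finite_range b).isCompact_convexHull (𝕜 := ℝ)
  have hconst : IntegrableOn (fun _ => a + c • G) T μ := integrableOn_const hT.measure_lt_top.ne
  have hlin : IntegrableOn (fun x => c • (x - G)) T μ :=
    ((continuous_id.sub continuous_const).continuousOn.integrableOn_compact hT).smul c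
  have hsplit : ∫ x in T, (a + c • x) ∂μ = μ.real T • (a + c • G) := by
    calc ∫ x in T, (a + c • x) ∂μ = ∫ x in T, ((a + c • G) + c • (x - G)) ∂μ := by
          congr 1 with x; module
      _ = μ.real T • (a + c • G) + c • ∫ x in T, (x - G) ∂μ := by
          rw [integral_add hconst hlin, setIntegral_const, integral_smul]
      _ = μ.real T • (a + c • G) := by
          rw [b.setIntegral_convexHull_sub_centroid, smul_zero, add_zero]
  rw [hsplit] at h
  exact (smul_eq_zero.mp h).resolve_left (b.measureReal_convexHull_pos μ).ne'

end AffineBasis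

section Plane

variable {E : Type*} [NormedAddCommGroup E] [InnerProductSpace ℝ E]

theorem inner_sub_centroid_of_mem_segment (A : Fin 3 → E) {n m : E} {i : Fin 3}
    (horth : inner ℝ n (A (i + 1) - A (i + 2)) = 0) (hm : m ∈ segment ℝ (A (i + 1)) (A (i + 2))) :
    inner ℝ n (m - univ.centroid ℝ A) = inner ℝ n (A (i + 1) - A i) / 3 := by
  obtain ⟨α, β, -, -, hαβ, rfl⟩ := hm
  have hG := three_smul_centroid_fin_three A
  rw [Fin.sum_univ_three_rotate A i] at hG
  have hscaled : (3 : ℝ) • (α • A (i + 1) + β • A (i + 2) - univ.centroid ℝ A)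
      = (A (i + 1) - A i) + (1 - 3 * β) • (A (i + 1) - A (i + 2)) := by
    rw [eq_sub_of_add_eq hαβ]
    linear_combination (norm := module) -hG
  have h := congrArg (inner ℝ n) hscaled
  rw [inner_smul_right, inner_add_right, inner_smul_right, horth] at h
  linarith

variable [Fact (Module.finrank ℝ E = 2)]

namespace Orientation

variable (o : Orientation ℝ E (Fin 2))

theorem abs_areaForm_eq_norm_mul_abs_inner {n w : E} (hn : ‖n‖ = 1)
    (hnw : inner ℝ n w = 0) (y : E) : |o.areaForm w y| = ‖w‖ * |inner ℝ n y| := by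
  have h := o.inner_mul_areaForm_sub n w y
  rw [hnw, hn, zero_mul, zero_sub, one_pow, one_mul] at h
  rw [← h, abs_neg, abs_mul, o.abs_areaForm_of_orthogonal hnw, hn, one_mul]

theorem areaForm_sub_sub_fin_three (A : Fin 3 → E) (i : Fin 3) :
    o.areaForm (A (i + 1) - A i) (A (i + 2) - A i) = o.areaForm (A 1 - A 0) (A 2 - A 0) := by
  have h01 := o.areaForm_swap (A 0) (A 1)
  have h02 := o.areaForm_swap (A 0) (A 2)
  have h12 := o.areaForm_swap (A 1) (A 2)
  fin_cases i <;> simp [map_sub, o.areaForm_apply_self] <;> linarith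

theorem inner_mul_dist_eq_abs_areaForm (A : Fin 3 → E) {n : E} {i : Fin 3} (hn : ‖n‖ = 1)
    (horth : inner ℝ n (A (i + 1) - A (i + 2)) = 0) (hpos : 0 ≤ inner ℝ n (A (i + 1) - A i)) :
    inner ℝ n (A (i + 1) - A i) * dist (A (i + 1)) (A (i + 2))
      = |o.areaForm (A 1 - A 0) (A 2 - A 0)| := by
  have hcyc := o.areaForm_sub_sub_fin_three A (i + 1)
  rw [add_assoc, show (1 + 1 : Fin 3) = 2 from rfl, add_assoc, show (1 + 2 : Fin 3) = 0 from rfl,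
    add_zero, ← neg_sub (A (i + 1)), ← neg_sub (A (i + 1))] at hcyc
  simp only [map_neg, LinearMap.neg_apply, neg_neg] at hcyc
  rw [← hcyc, o.abs_areaForm_eq_norm_mul_abs_inner hn horth, abs_of_nonneg hpos, dist_eq_norm,
    mul_comm]

end Orientation

theorem inner_mul_dist_eq_of_unit_normal (A : Fin 3 → E) {n : Fin 3 → E} (hn : ∀ i, ‖n i‖ = 1)
    (horth : ∀ i, inner ℝ (n i) (A (i + 1) - A (i + 2)) = 0)
    (hpos : ∀ i, 0 ≤ inner ℝ (n i) (A (i + 1) - A i)) (i j : Fin 3) :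
    inner ℝ (n i) (A (i + 1) - A i) * dist (A (i + 1)) (A (i + 2))
      = inner ℝ (n j) (A (j + 1) - A j) * dist (A (j + 1)) (A (j + 2)) := by
  have : FiniteDimensional ℝ E := .of_fact_finrank_eq_two
  let o : Orientation ℝ E (Fin 2) := (Module.finBasisOfFinrankEq ℝ E Fact.out).orientation
  rw [o.inner_mul_dist_eq_abs_areaForm A (hn i) (horth i) (hpos i),
    o.inner_mul_dist_eq_abs_areaForm A (hn j) (horth j) (hpos j)]

end Plane

/-- Elementwise core of the paper's proposition on the triviality of the kernel
of the non-stabilized discrete bilinear form for lowest-order triangular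
elements: for a lowest-order Raviart–Thomas field `v x = a + c • x` on a
nondegenerate triangle with vertices `A 0, A 1, A 2` (edge `e i` being the
segment joining `A (i+1)` and `A (i+2)`, with outward unit normal `n i`),
the function `x ↦ ⟨v x, n i⟩` is constant on each edge, and if
`∫_T v = 0` then the three scaled edge fluxes coincide; if moreover the normal
component of `v` vanishes on some edge, then `v` is identically zero. -/
theorem rt0_triangle_kernel
    (A : Fin 3 → EuclideanSpace ℝ (Fin 2))
    (hA : AffineIndependent ℝ A)
    (n : Fin 3 → EuclideanSpace ℝ (Fin 2))
    (hn_unit : ∀ i, ‖n i‖ = 1)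
    (hn_orth : ∀ i, (inner ℝ (n i) (A (i + 1) - A (i + 2)) : ℝ) = 0)
    (hn_out : ∀ i, ∀ m ∈ segment ℝ (A (i + 1)) (A (i + 2)),
      (inner ℝ (n i) (A i - m) : ℝ) < 0)
    (a : EuclideanSpace ℝ (Fin 2)) (c : ℝ)
    (v : EuclideanSpace ℝ (Fin 2) → EuclideanSpace ℝ (Fin 2))
    (hv : ∀ x, v x = a + c • x)
    (hint : ∫ x in convexHull ℝ (Set.range A), v x = 0) :
    ((∀ i j : Fin 3, ∀ mi ∈ segment ℝ (A (i + 1)) (A (i + 2)),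
        ∀ mj ∈ segment ℝ (A (j + 1)) (A (j + 2)),
        (inner ℝ (v mi) (n i) : ℝ) * dist (A (i + 1)) (A (i + 2))
          = (inner ℝ (v mj) (n j) : ℝ) * dist (A (j + 1)) (A (j + 2)))
      ∧
      (∀ i : Fin 3,
        (∀ m ∈ segment ℝ (A (i + 1)) (A (i + 2)),
          (inner ℝ (v m) (n i) : ℝ) = 0) →
        a = 0 ∧ c = 0)) := by
  let b : AffineBasis (Fin 3) ℝ (EuclideanSpace ℝ (Fin 2)) :=
    ⟨A, hA, hA.affineSpan_eq_top_iff_card_eq_finrank_add_one.mpr (by simp)⟩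
  have hmean : ∫ x in convexHull ℝ (range A), (a + c • x) = 0 := by simpa only [hv] using hint
  have hcentroid : a + c • univ.centroid ℝ A = 0 := b.add_smul_centroid_eq_zero volume hmean
  have hflux : ∀ i, ∀ m ∈ segment ℝ (A (i + 1)) (A (i + 2)),
      inner ℝ (v m) (n i) = c / 3 * inner ℝ (n i) (A (i + 1) - A i) := by
    intro i m hm
    have hvm : v m = c • (m - univ.centroid ℝ A) := by
      rw [hv]; linear_combination (norm := module) hcentroid
    rw [hvm, real_inner_smul_left, real_inner_comm,
      inner_sub_centroid_of_mem_segment A (hn_orth i) hm]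
    ring
  have hheight : ∀ i, 0 < inner ℝ (n i) (A (i + 1) - A i) := fun i => by
    have h := hn_out i _ (left_mem_segment ℝ _ _)
    rw [← neg_sub, inner_neg_right] at h
    linarith
  have : Fact (Module.finrank ℝ (EuclideanSpace ℝ (Fin 2)) = 2) := ⟨finrank_euclideanSpace_fin⟩
  refine ⟨fun i j mi hmi mj hmj => ?_, fun i hzero => ?_⟩
  · rw [hflux i mi hmi, hflux j mj hmj, mul_assoc, mul_assoc,
      inner_mul_dist_eq_of_unit_normal A hn_unit hn_orth (fun k => (hheight k).le) i j]
  · have hc : c = 0 := by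
      have h := hzero _ (left_mem_segment ℝ _ _)
      rw [hflux i _ (left_mem_segment ℝ _ _)] at h
      simpa [(hheight i).ne'] using h
    exact ⟨by simpa [hc] using hcentroid, hc⟩
end
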